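/- arXiv:2404.04944 — 7 statements merged into one kernel-verified Lean document; each statement's English description precedes it below -/
import Mathlib

section
/- For any n×n matrix X over a field K, any 1 ≤ k ≤ n, and any upper unitriangular matrix u ∈ UT(n), the lower-left corner minor D_k of order n−k+1 (formed from rows [k,n] and columns [1,n−k+1]) satisfies D_k(u⁻¹ X u) = D_k(X). -/
open Matrix BigOperators

/-- Clamp a natural number into `Fin n` (identity on values `< n`). -/
def fidx (n : ℕ) (hn : 0 < n) (x : ℕ) : Fin n := ⟨x % n, Nat.mod_lt _ hn⟩

/-- `Dmin n hn k X` is the corner minor `D_k(X)`: determinant of the submatrix of `X`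
with rows `k, …, n` and columns `1, …, n-k+1` (1-based indexing). -/
def Dmin {R : Type*} [CommRing R] (n : ℕ) (hn : 0 < n) (k : ℕ)
    (X : Matrix (Fin n) (Fin n) R) : R :=
  (Matrix.of fun a b : Fin (n - k + 1) =>
    X (fidx n hn (k - 1 + a.val)) (fidx n hn b.val)).det

/-- `Mmin n hn i j X` is the minor `M_{ij}(X)` of order `i' = n-i+1`: rows `i, …, n`
and columns `1, …, i'-1` together with column `j` (1-based indexing). -/
def Mmin {R : Type*} [CommRing R] (n : ℕ) (hn : 0 < n) (i j : ℕ)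
    (X : Matrix (Fin n) (Fin n) R) : R :=
  (Matrix.of fun a b : Fin (n - i + 1) =>
    X (fidx n hn (i - 1 + a.val)) (fidx n hn (if b.val < n - i then b.val else j - 1))).det

/-- `Nmin n hn j k Y` is the minor `N_{jk}(Y)` of order `k' = n-k+1`: rows `j, k+1, …, n`
and columns `1, …, k'` (1-based indexing). -/
def Nmin {R : Type*} [CommRing R] (n : ℕ) (hn : 0 < n) (j k : ℕ)
    (Y : Matrix (Fin n) (Fin n) R) : R :=
  (Matrix.of fun a b : Fin (n - k + 1) =>
    Y (fidx n hn (if a.val = 0 then j - 1 else k + a.val - 1)) (fidx n hn b.val)).det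

/-- `Pmin n hn i k X Y = P_{ik}(X,Y) = Σ_{i' ≤ j ≤ k} M_{ij}(X) N_{jk}(Y)`. -/
def Pmin {R : Type*} [CommRing R] (n : ℕ) (hn : 0 < n) (i k : ℕ)
    (X Y : Matrix (Fin n) (Fin n) R) : R :=
  ∑ j ∈ Finset.Icc (n - i + 1) k, Mmin n hn i j X * Nmin n hn j k Y

/-- Upper unitriangular matrices: ones on the diagonal, zeros below it. -/
def IsUnitriangular {R : Type*} [CommRing R] {n : ℕ}
    (u : Matrix (Fin n) (Fin n) R) : Prop :=
  (∀ i, u i i = 1) ∧ ∀ i j : Fin n, j < i → u i j = 0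

/-!
Let `u` be upper unitriangular. The rows `k, …, n` form a final segment, so left
multiplication by `u⁻¹` mixes each of these rows only with later rows: the row block of
`u⁻¹ X` is the row block of `X` times the unitriangular diagonal block of `u⁻¹`.
Dually the columns `1, …, n-k+1` form an initial segment, so right multiplication by `u`
multiplies the column block by a unitriangular diagonal block of `u`. Both factors have
determinant `1`.
-/

namespace Matrix

variable {R ι α β γ : Type*} [CommRing R] [LinearOrder ι]

theorem IsUpperTriangular.submatrix_mul_of_isUpperSet [Fintype ι] [Fintype α]
    {A : Matrix ι ι R} (hA : A.IsUpperTriangular) (Y : Matrix ι β R) {r : α → ι}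
    (hr : Function.Injective r) (hr' : IsUpperSet (Set.range r)) (c : γ → β) :
    (A * Y).submatrix r c = A.submatrix r r * Y.submatrix r c := by
  ext a b
  simp only [submatrix_apply, mul_apply]
  refine (Fintype.sum_of_injective r hr _ _ (fun p hp => ?_) fun _ => rfl).symm
  have hlt : p < r a := not_le.1 fun h => hp (hr' h (Set.mem_range_self a))
  rw [hA hlt, zero_mul]

theorem IsUpperTriangular.mul_submatrix_of_isLowerSet [Fintype ι] [Fintype α]
    {A : Matrix ι ι R} (hA : A.IsUpperTriangular) (Y : Matrix β ι R) {c : α → ι}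
    (hc : Function.Injective c) (hc' : IsLowerSet (Set.range c)) (r : γ → β) :
    (Y * A).submatrix r c = Y.submatrix r c * A.submatrix c c := by
  ext a b
  simp only [submatrix_apply, mul_apply]
  refine (Fintype.sum_of_injective c hc _ _ (fun p hp => ?_) fun _ => rfl).symm
  have hlt : c b < p := not_le.1 fun h => hp (hc' h (Set.mem_range_self b))
  rw [hA hlt, mul_zero]

theorem IsUpperTriangular.det_submatrix [Fintype α] [LinearOrder α] {A : Matrix ι ι R}
    (hA : A.IsUpperTriangular) {r : α → ι} (hr : StrictMono r) :
    (A.submatrix r r).det = ∏ a, A (r a) (r a) :=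
  det_of_isUpperTriangular fun _ _ h => hA (hr h)

theorem det_submatrix_inv_mul_mul_of_isUpperTriangular [Fintype ι] [Fintype α] [LinearOrder α]
    {u : Matrix ι ι R} (hu : u.IsUpperTriangular) (hdiag : ∀ i, u i i = 1) (X : Matrix ι ι R)
    {r c : α → ι} (hr : StrictMono r) (hc : StrictMono c) (hr' : IsUpperSet (Set.range r))
    (hc' : IsLowerSet (Set.range c)) :
    ((u⁻¹ * X * u).submatrix r c).det = (X.submatrix r c).det := by
  have hunit : IsUnit u.det := by simp [det_of_isUpperTriangular hu, hdiag]
  have := u.invertibleOfIsUnitDet hunit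
  have hinv : u⁻¹.IsUpperTriangular := blockTriangular_inv_of_blockTriangular hu
  have hrr : (u.submatrix r r).det = 1 := by simp [hu.det_submatrix hr, hdiag]
  have hcc : (u.submatrix c c).det = 1 := by simp [hu.det_submatrix hc, hdiag]
  -- `u⁻¹ * u = 1` restricted to the rows `r` shows that the block of `u⁻¹` has determinant 1
  have hinv_rr : (u⁻¹.submatrix r r).det = 1 := by
    have h := congrArg det (hinv.submatrix_mul_of_isUpperSet u hr.injective hr' r)
    rwa [nonsing_inv_mul u hunit, submatrix_one _ hr.injective, det_one, det_mul, hrr,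
      mul_one, eq_comm] at h
  rw [hu.mul_submatrix_of_isLowerSet _ hc.injective hc',
    hinv.submatrix_mul_of_isUpperSet _ hr.injective hr', det_mul, det_mul, hinv_rr, hcc,
    one_mul, mul_one]

end Matrix

section Corner

variable {n k : ℕ}

def cornerRow (hk : 1 ≤ k) (hkn : k ≤ n) (a : Fin (n - k + 1)) : Fin n :=
  ⟨k - 1 + a, by omega⟩

def cornerCol (hk : 1 ≤ k) (hkn : k ≤ n) (b : Fin (n - k + 1)) : Fin n :=
  ⟨b, by omega⟩

variable (hk : 1 ≤ k) (hkn : k ≤ n)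

theorem strictMono_cornerRow : StrictMono (cornerRow hk hkn) :=
  fun a b h => by simp only [cornerRow, Fin.mk_lt_mk]; omega

theorem strictMono_cornerCol : StrictMono (cornerCol hk hkn) :=
  fun _ _ h => h

theorem isUpperSet_range_cornerRow : IsUpperSet (Set.range (cornerRow hk hkn)) := by
  rintro _ j hij ⟨a, rfl⟩
  have hle : k - 1 + (a : ℕ) ≤ j := hij
  exact ⟨⟨j - (k - 1), by omega⟩, Fin.ext (by simp only [cornerRow]; omega)⟩

theorem isLowerSet_range_cornerCol : IsLowerSet (Set.range (cornerCol hk hkn)) := by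
  rintro _ j hji ⟨b, rfl⟩
  have hle : (j : ℕ) ≤ b := hji
  exact ⟨⟨j, by omega⟩, rfl⟩

theorem Dmin_eq_det_submatrix {R : Type*} [CommRing R] (hn : 0 < n)
    (X : Matrix (Fin n) (Fin n) R) :
    Dmin n hn k X = (X.submatrix (cornerRow hk hkn) (cornerCol hk hkn)).det := by
  unfold Dmin
  congr 1
  ext a b
  exact congrArg₂ X (Fin.ext (Nat.mod_eq_of_lt (cornerRow hk hkn a).isLt))
    (Fin.ext (Nat.mod_eq_of_lt (cornerCol hk hkn b).isLt))

end Corner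

/-- the corner minors `D_k` are invariant under conjugation by
upper unitriangular matrices. -/
theorem Dmin_unitriangular_invariant {K : Type*} [Field K] (n : ℕ) (hn : 0 < n)
    (k : ℕ) (hk : 1 ≤ k) (hkn : k ≤ n)
    (X u : Matrix (Fin n) (Fin n) K) (hu : IsUnitriangular u) :
    Dmin n hn k (u⁻¹ * X * u) = Dmin n hn k X := by
  obtain ⟨hdiag, hlower⟩ := hu
  rw [Dmin_eq_det_submatrix hk hkn hn, Dmin_eq_det_submatrix hk hkn hn]
  exact det_submatrix_inv_mul_mul_of_isUpperTriangular (fun i j h => hlower i j h) hdiag X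
    (strictMono_cornerRow hk hkn) (strictMono_cornerCol hk hkn)
    (isUpperSet_range_cornerRow hk hkn) (isLowerSet_range_cornerCol hk hkn)
end

section
/- For any pair (i,k) with n−i+1 < k ≤ n, the polynomial P_{ik}(X,Y) = Σ_{j=i'}^{k} M_{ij}(X)·N_{jk}(Y) is invariant under the simultaneous substitution (X,Y) ↦ (u⁻¹Xu, u⁻¹Yu) for every upper unitriangular matrix u ∈ UT(n). -/
open Matrix BigOperators

/-! Write `m(X)` for the vector `p ↦ M_{i,p+1}(X)` and `n(Y)` for `p ↦ N_{p+1,k}(Y)`. Outside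
`i' ≤ p + 1 ≤ k` these minors vanish (a repeated column, resp. row), so `P_{ik}(X,Y) = m(X) ⬝ n(Y)`.
Multiplying `X` on the left by an upper unitriangular `v` adds to each of the rows `i, …, n` a
combination of later rows, so every `M_{ij}` is unchanged; dually, `N_{jk}(Y u) = N_{jk}(Y)`.
Multiplying on the right by `u` turns column `j` into a combination of the columns `≤ j`, and
the columns `1, …, i' - 1` into combinations of one another, whence `m(X u) = m(X) u`; likewise
`n(v Y) = v n(Y)`. Therefore
`P(u⁻¹Xu, u⁻¹Yu) = (m(X) u) ⬝ (u⁻¹ n(Y)) = m(X) ⬝ n(Y)`. -/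

namespace Matrix

variable {α : Type*}

theorem submatrix_mul_eq_of_notMem_range {l m o κ ι ι' : Type*} [NonUnitalNonAssocSemiring α]
    [Fintype m] [Fintype κ] (A : Matrix l m α) (B : Matrix m o α) (r : ι → l) {e : κ → m}
    (he : Function.Injective e) (c : ι' → o)
    (h : ∀ a b x, x ∉ Set.range e → A (r a) x * B x (c b) = 0) :
    (A * B).submatrix r c = A.submatrix r e * B.submatrix e c := by
  ext a b
  exact (Fintype.sum_of_injective e he _ _ (h a b) fun _ => rfl).symm

theorem submatrix_updateCol_of_injective {l o ι ι' : Type*} [DecidableEq o] [DecidableEq ι']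
    (A : Matrix l o α) (r : ι → l) {c : ι' → o} (hc : Function.Injective c) (L : ι')
    (z : l → α) : (A.updateCol (c L) z).submatrix r c = (A.submatrix r c).updateCol L (z ∘ r) := by
  ext a b
  simp [updateCol_apply, hc.eq_iff]

theorem submatrix_updateRow_of_injective {l o ι ι' : Type*} [DecidableEq l] [DecidableEq ι]
    (A : Matrix l o α) {r : ι → l} (hr : Function.Injective r) (L : ι) (c : ι' → o)
    (z : o → α) : (A.updateRow (r L) z).submatrix r c = (A.submatrix r c).updateRow L (z ∘ c) := by
  ext a b
  simp [updateRow_apply, hr.eq_iff]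

variable {R ι κ : Type*} [CommRing R] [Fintype ι] [DecidableEq ι]

theorem det_updateRow_sum_smul (A : Matrix ι ι R) (L : ι) (s : Finset κ) (f : κ → R)
    (w : κ → ι → R) :
    (A.updateRow L (∑ q ∈ s, f q • w q)).det = ∑ q ∈ s, f q * (A.updateRow L (w q)).det := by
  rw [← Finset.sum_congr rfl fun q _ => det_updateRow_smul A L (f q) (w q)]
  exact (detRowAlternating : (ι → R) [⋀^ι]→ₗ[R] R).map_update_sum s L _ A

theorem det_updateCol_sum_smul (A : Matrix ι ι R) (L : ι) (s : Finset κ) (f : κ → R)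
    (w : κ → ι → R) :
    (A.updateCol L (∑ q ∈ s, f q • w q)).det = ∑ q ∈ s, f q * (A.updateCol L (w q)).det := by
  simp only [← det_transpose (updateCol _ _ _), ← updateRow_transpose, det_updateRow_sum_smul]

end Matrix

namespace IsUnitriangular

variable {R : Type*} [CommRing R] {n : ℕ} {u : Matrix (Fin n) (Fin n) R}

theorem det_submatrix {ι : Type*} [Fintype ι] [LinearOrder ι] (hu : IsUnitriangular u)
    {e : ι → Fin n} (he : StrictMono e) : (u.submatrix e e).det = 1 := by
  rw [det_of_isUpperTriangular (M := u.submatrix e e) fun a b hab => hu.2 _ _ (he hab)]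
  exact Finset.prod_eq_one fun a _ => hu.1 (e a)

theorem det_eq_one (hu : IsUnitriangular u) : u.det = 1 := by
  simpa using hu.det_submatrix strictMono_id

theorem updateCol_single (hu : IsUnitriangular u) (p : Fin n) :
    IsUnitriangular (u.updateCol p (Pi.single p 1)) := by
  refine ⟨fun a => ?_, fun a b hab => ?_⟩
  · by_cases h : a = p <;> simp [h, hu.1]
  · by_cases h : b = p
    · subst h; simp [hab.ne']
    · simp [h, hu.2 a b hab]

theorem updateRow_single (hu : IsUnitriangular u) (p : Fin n) :
    IsUnitriangular (u.updateRow p (Pi.single p 1)) := by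
  refine ⟨fun a => ?_, fun a b hab => ?_⟩
  · by_cases h : a = p <;> simp [updateRow_apply, h, hu.1]
  · by_cases h : a = p
    · subst h; simp [updateRow_apply, hab.ne]
    · simp [updateRow_apply, h, hu.2 a b hab]

theorem inv (hu : IsUnitriangular u) : IsUnitriangular u⁻¹ := by
  have : Invertible u := u.invertibleOfIsUnitDet (by simp [hu.det_eq_one])
  refine ⟨fun p => ?_, fun a b hab => blockTriangular_inv_of_blockTriangular
    (fun a b hab => hu.2 a b hab) hab⟩
  rw [inv_def, hu.det_eq_one, Ring.inverse_one, one_smul, adjugate_apply]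
  exact (hu.updateRow_single p).det_eq_one

variable {ι : Type*} [Fintype ι] [LinearOrder ι]

theorem det_submatrix_mul_right {l : Type*} (hu : IsUnitriangular u) (X : Matrix l (Fin n) R)
    (r : ι → l) {c : ι → Fin n} (hc : StrictMono c)
    (h : ∀ b x, x ∉ Set.range c → u x (c b) = 0) :
    ((X * u).submatrix r c).det = (X.submatrix r c).det := by
  rw [submatrix_mul_eq_of_notMem_range X u r hc.injective c fun a b x hx => by
    rw [h b x hx, mul_zero], det_mul, hu.det_submatrix hc, mul_one]

theorem det_submatrix_mul_left {o : Type*} (hu : IsUnitriangular u) (Y : Matrix (Fin n) o R)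
    {r : ι → Fin n} (hr : StrictMono r) (c : ι → o)
    (h : ∀ a x, x ∉ Set.range r → u (r a) x = 0) :
    ((u * Y).submatrix r c).det = (Y.submatrix r c).det := by
  rw [submatrix_mul_eq_of_notMem_range u Y r hr.injective c fun a b x hx => by
    rw [h a x hx, zero_mul], det_mul, hu.det_submatrix hr, one_mul]

theorem det_submatrix_mul_right_eq_sum {l : Type*} (hu : IsUnitriangular u)
    (X : Matrix l (Fin n) R) (r : ι → l) {c : ι → Fin n} (hc : StrictMono c) (L : ι)
    (hle : ∀ b, c b ≤ c L) (hclosed : ∀ b, c b < c L → ∀ x ≤ c b, x ∈ Set.range c) :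
    ((X * u).submatrix r c).det
      = ∑ q, u q (c L) * ((X.submatrix r c).updateCol L fun a => X (r a) q).det := by
  set p := c L
  set z : l → R := fun a => (X * u) a p
  -- Column `p` is the only column of `X * u` in the minor that involves columns of `X` outside
  -- `c`; moving it into `X` leaves a unitriangular factor that only recombines columns of `c`.
  have hagree : (X * u).submatrix r c
      = (X.updateCol p z * u.updateCol p (Pi.single p 1)).submatrix r c := by
    ext a b
    rcases (hle b).lt_or_eq with hb | hb
    · simp only [submatrix_apply, mul_apply]
      refine Finset.sum_congr rfl fun x _ => ?_
      by_cases hx : x = p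
      · subst hx; simp [hu.2 _ _ hb, hb.ne]
      · simp [hx, hb.ne]
    · simp [hb, z, mul_apply, Pi.single_apply]
  rw [hagree, (hu.updateCol_single p).det_submatrix_mul_right _ r hc ?_,
    submatrix_updateCol_of_injective _ _ hc.injective]
  · have hz : z ∘ r = ∑ q, u q p • fun a => X (r a) q := by
      funext a
      simp [z, mul_apply, mul_comm]
    rw [hz, det_updateCol_sum_smul]
  · intro b x hx
    rcases (hle b).lt_or_eq with hb | hb
    · rw [updateCol_ne hb.ne]
      exact hu.2 _ _ (lt_of_not_ge fun hxb => hx (hclosed b hb x hxb))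
    · have hxp : x ≠ p := fun h => hx ⟨L, h.symm⟩
      simp [hb, hxp]

theorem det_submatrix_mul_left_eq_sum {o : Type*} (hu : IsUnitriangular u)
    (Y : Matrix (Fin n) o R) {r : ι → Fin n} (hr : StrictMono r) (c : ι → o) (L : ι)
    (hge : ∀ a, r L ≤ r a) (hclosed : ∀ a, r L < r a → ∀ x ≥ r a, x ∈ Set.range r) :
    ((u * Y).submatrix r c).det
      = ∑ s, u (r L) s * ((Y.submatrix r c).updateRow L fun b => Y s (c b)).det := by
  set q := r L
  set z : o → R := fun b => (u * Y) q b
  have hagree : (u * Y).submatrix r c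
      = (u.updateRow q (Pi.single q 1) * Y.updateRow q z).submatrix r c := by
    ext a b
    rcases (hge a).lt_or_eq with ha | ha
    · simp only [submatrix_apply, mul_apply]
      refine Finset.sum_congr rfl fun x _ => ?_
      by_cases hx : x = q
      · subst hx; simp [hu.2 _ _ ha, ha.ne']
      · simp [updateRow_apply, hx, ha.ne']
    · simp [← ha, z, mul_apply, Pi.single_apply]
  rw [hagree, (hu.updateRow_single q).det_submatrix_mul_left _ hr c ?_,
    submatrix_updateRow_of_injective _ hr.injective]
  · have hz : z ∘ c = ∑ s, u q s • fun b => Y s (c b) := by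
      funext b
      simp [z, mul_apply]
    rw [hz, det_updateRow_sum_smul]
  · intro a x hx
    rcases (hge a).lt_or_eq with ha | ha
    · rw [updateRow_ne ha.ne']
      exact hu.2 _ _ (lt_of_not_ge fun hxa => hx (hclosed a ha x hxa))
    · have hxq : x ≠ q := fun h => hx ⟨L, h.symm⟩
      simp [← ha, Ne.symm hxq]

end IsUnitriangular

section Minors

variable {R : Type*} [CommRing R] {n : ℕ} (hn : 0 < n)

def mRows (i : ℕ) : Fin (n - i + 1) → Fin n := fun a => fidx n hn (i - 1 + a)

def mCols (i j : ℕ) : Fin (n - i + 1) → Fin n :=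
  fun b => fidx n hn (if (b : ℕ) < n - i then b else j - 1)

def nRows (j k : ℕ) : Fin (n - k + 1) → Fin n :=
  fun a => fidx n hn (if (a : ℕ) = 0 then j - 1 else k + a - 1)

def nCols (k : ℕ) : Fin (n - k + 1) → Fin n := fun b => fidx n hn b

theorem Mmin_eq_det_submatrix (i j : ℕ) (X : Matrix (Fin n) (Fin n) R) :
    Mmin n hn i j X = (X.submatrix (mRows hn i) (mCols hn i j)).det := rfl

theorem Nmin_eq_det_submatrix (j k : ℕ) (Y : Matrix (Fin n) (Fin n) R) :
    Nmin n hn j k Y = (Y.submatrix (nRows hn j k) (nCols hn k)).det := rfl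

theorem fidx_val {x : ℕ} (hx : x < n) : (fidx n hn x : ℕ) = x := Nat.mod_eq_of_lt hx

@[simp]
theorem fidx_coe (p : Fin n) : fidx n hn p = p := Fin.ext (fidx_val hn p.isLt)

theorem mRows_val {i : ℕ} (hi : 1 ≤ i) (hin : i ≤ n) (a : Fin (n - i + 1)) :
    (mRows hn i a : ℕ) = i - 1 + a :=
  fidx_val hn (by omega)

theorem mCols_val {i j : ℕ} (hjn : j ≤ n) (b : Fin (n - i + 1)) :
    (mCols hn i j b : ℕ) = if (b : ℕ) < n - i then (b : ℕ) else j - 1 :=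
  fidx_val hn (by split_ifs <;> omega)

theorem nRows_val {j k : ℕ} (hjn : j ≤ n) (a : Fin (n - k + 1)) :
    (nRows hn j k a : ℕ) = if (a : ℕ) = 0 then j - 1 else k + a - 1 :=
  fidx_val hn (by split_ifs <;> omega)

theorem nCols_val {k : ℕ} (hk : 1 ≤ k) (b : Fin (n - k + 1)) : (nCols hn k b : ℕ) = b :=
  fidx_val hn (by omega)

theorem Mmin_eq_zero_of_lt {i j : ℕ} (h : j - 1 < n - i) (X : Matrix (Fin n) (Fin n) R) :
    Mmin n hn i j X = 0 :=
  det_zero_of_column_eq (i := ⟨j - 1, by omega⟩) (j := Fin.last (n - i))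
    (by simp only [Ne, Fin.ext_iff, Fin.val_last]; omega) fun a => by simp [h]

theorem Nmin_eq_zero_of_lt {j k : ℕ} (hkj : k < j) (hjn : j ≤ n) (Y : Matrix (Fin n) (Fin n) R) :
    Nmin n hn j k Y = 0 :=
  det_zero_of_row_eq (i := 0) (j := ⟨j - k, by omega⟩)
    (by simp only [Ne, Fin.ext_iff, Fin.val_zero]; omega) <| by
    funext b
    have hjk : k + (j - k) - 1 = j - 1 := by omega
    simp [hjk, show j - k ≠ 0 by omega]

variable {u : Matrix (Fin n) (Fin n) R}

theorem Mmin_unitriangular_mul (hu : IsUnitriangular u) {i : ℕ} (hi : 1 ≤ i) (hin : i ≤ n)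
    (j : ℕ) (X : Matrix (Fin n) (Fin n) R) : Mmin n hn i j (u * X) = Mmin n hn i j X := by
  have hr : StrictMono (mRows hn i) := fun a b h => by
    rw [Fin.lt_def, mRows_val hn hi hin, mRows_val hn hi hin]
    exact Nat.add_lt_add_left h _
  refine hu.det_submatrix_mul_left X hr _ fun a x hx => hu.2 _ _ ?_
  rw [Fin.lt_def, mRows_val hn hi hin]
  by_contra h
  exact hx ⟨⟨x - (i - 1), by omega⟩, Fin.ext (by simp only [mRows_val hn hi hin]; omega)⟩

theorem Nmin_mul_unitriangular (hu : IsUnitriangular u) {k : ℕ} (hk : 1 ≤ k) (j : ℕ)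
    (Y : Matrix (Fin n) (Fin n) R) :
    Nmin n hn j k (Y * u) = Nmin n hn j k Y := by
  have hc : StrictMono (nCols hn k) := fun a b h => by
    rwa [Fin.lt_def, nCols_val hn hk, nCols_val hn hk]
  rw [Nmin_eq_det_submatrix, Nmin_eq_det_submatrix]
  refine hu.det_submatrix_mul_right Y _ hc fun b x hx => hu.2 _ _ ?_
  rw [Fin.lt_def, nCols_val hn hk]
  by_contra h
  exact hx ⟨⟨x, by omega⟩, Fin.ext (nCols_val hn hk _)⟩

theorem Mmin_succ_mul_unitriangular (hu : IsUnitriangular u) (i : ℕ)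
    (X : Matrix (Fin n) (Fin n) R) :
    (fun p : Fin n => Mmin n hn i (p + 1) (X * u))
      = (fun p : Fin n => Mmin n hn i (p + 1) X) ᵥ* u := by
  funext p
  simp only [vecMul, dotProduct]
  rcases lt_or_ge (p : ℕ) (n - i) with hp | hp
  · rw [Mmin_eq_zero_of_lt hn (by omega)]
    refine (Finset.sum_eq_zero fun q _ => ?_).symm
    rcases lt_or_ge (q : ℕ) (n - i) with hq | hq
    · rw [Mmin_eq_zero_of_lt hn (by omega), zero_mul]
    · rw [hu.2 q p (by rw [Fin.lt_def]; omega), mul_zero]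
  have hval := mCols_val hn (i := i) (j := p + 1) (by omega)
  have hc : StrictMono (mCols hn i (p + 1)) := fun a b h => by
    rw [Fin.lt_def, hval, hval]; rw [Fin.lt_def] at h; split_ifs <;> omega
  have hL : mCols hn i (p + 1) (Fin.last _) = p := Fin.ext (by rw [hval]; simp)
  rw [Mmin_eq_det_submatrix, hu.det_submatrix_mul_right_eq_sum X _ hc (Fin.last _) ?_ ?_, hL]
  · refine Finset.sum_congr rfl fun q _ => ?_
    rw [mul_comm, Mmin_eq_det_submatrix]
    congr 2
    ext a b
    by_cases hb : b = Fin.last _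
    · subst hb; simp [mCols]
    · have hb' : (b : ℕ) < n - i := by rw [Fin.ext_iff, Fin.val_last] at hb; omega
      simp [hb, mCols, hb']
  · intro b
    rw [hL, Fin.le_def, hval]
    split_ifs <;> omega
  · intro b hb x hx
    rw [hL, Fin.lt_def, hval] at hb
    rw [Fin.le_def, hval] at hx
    have hb' : (b : ℕ) < n - i := by
      split_ifs at hb with h
      · exact h
      · omega
    rw [if_pos hb'] at hx
    exact ⟨⟨x, by omega⟩, Fin.ext (by rw [hval, if_pos (show x.val < n - i by omega)])⟩

theorem Nmin_succ_unitriangular_mul (hu : IsUnitriangular u) (k : ℕ)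
    (Y : Matrix (Fin n) (Fin n) R) :
    (fun q : Fin n => Nmin n hn (q + 1) k (u * Y))
      = u *ᵥ fun q : Fin n => Nmin n hn (q + 1) k Y := by
  funext q
  simp only [mulVec, dotProduct]
  rcases le_or_gt k q with hq | hq
  · rw [Nmin_eq_zero_of_lt hn (by omega) (by omega)]
    refine (Finset.sum_eq_zero fun s _ => ?_).symm
    rcases lt_or_ge (s : ℕ) q with hs | hs
    · rw [hu.2 q s (by rw [Fin.lt_def]; omega), zero_mul]
    · rw [Nmin_eq_zero_of_lt hn (by omega) (by omega), mul_zero]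
  have hval := nRows_val hn (j := q + 1) (k := k) (by omega)
  have hr : StrictMono (nRows hn (q + 1) k) := fun a b h => by
    rw [Fin.lt_def, hval, hval]; rw [Fin.lt_def] at h; split_ifs <;> omega
  have h0 : nRows hn (q + 1) k 0 = q := Fin.ext (by rw [hval]; simp)
  rw [Nmin_eq_det_submatrix, hu.det_submatrix_mul_left_eq_sum Y hr _ 0 ?_ ?_, h0]
  · refine Finset.sum_congr rfl fun s _ => ?_
    rw [Nmin_eq_det_submatrix]
    congr 2
    ext a b
    by_cases ha : a = 0
    · subst ha; simp [nRows]
    · have ha' : (a : ℕ) ≠ 0 := fun h => ha (Fin.ext h)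
      simp [ha, nRows, ha']
  · intro a
    rw [h0, Fin.le_def, hval]
    split_ifs <;> omega
  · intro a ha x hx
    rw [h0, Fin.lt_def, hval] at ha
    rw [ge_iff_le, Fin.le_def, hval] at hx
    have ha' : (a : ℕ) ≠ 0 := by
      intro h; rw [if_pos h] at ha; omega
    rw [if_neg ha'] at hx
    refine ⟨⟨x - k + 1, by omega⟩, Fin.ext ?_⟩
    rw [hval, if_neg (by simp)]
    simp only [Nat.add_succ_sub_one]
    omega

theorem Pmin_eq_dotProduct {i k : ℕ} (hkn : k ≤ n) (X Y : Matrix (Fin n) (Fin n) R) :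
    Pmin n hn i k X Y
      = (fun p : Fin n => Mmin n hn i (p + 1) X) ⬝ᵥ fun p => Nmin n hn (p + 1) k Y := by
  rw [dotProduct,
    Fin.sum_univ_eq_sum_range (fun p => Mmin n hn i (p + 1) X * Nmin n hn (p + 1) k Y),
    Finset.range_eq_Ico, Finset.sum_Ico_add' (fun j => Mmin n hn i j X * Nmin n hn j k Y), Pmin]
  refine Finset.sum_subset (fun j hj => ?_) fun j hj hj' => ?_
  · rw [Finset.mem_Icc] at hj
    rw [Finset.mem_Ico]
    omega
  · simp only [Finset.mem_Ico, Finset.mem_Icc, not_and, not_le] at hj hj'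
    rcases le_or_gt (n - i + 1) j with h | h
    · rw [Nmin_eq_zero_of_lt hn (hj' h) (by omega), mul_zero]
    · rw [Mmin_eq_zero_of_lt hn (by omega), zero_mul]

end Minors

/-- the polynomials `P_{ik}(X,Y)` (for `i' < k ≤ n`) are invariant under
simultaneous conjugation of `(X, Y)` by an upper unitriangular matrix. -/
theorem Pmin_unitriangular_invariant {K : Type*} [Field K] (n : ℕ) (hn : 0 < n)
    (i k : ℕ) (hi : 1 ≤ i) (hin : i ≤ n) (hik : n - i + 1 < k) (hkn : k ≤ n)
    (X Y u : Matrix (Fin n) (Fin n) K) (hu : IsUnitriangular u) :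
    Pmin n hn i k (u⁻¹ * X * u) (u⁻¹ * Y * u) = Pmin n hn i k X Y := by
  have hM : (fun p : Fin n => Mmin n hn i (p + 1) (u⁻¹ * X * u))
      = (fun p : Fin n => Mmin n hn i (p + 1) X) ᵥ* u := by
    rw [Mmin_succ_mul_unitriangular hn hu]
    simp only [Mmin_unitriangular_mul hn hu.inv hi hin]
  have hN : (fun q : Fin n => Nmin n hn (q + 1) k (u⁻¹ * Y * u))
      = u⁻¹ *ᵥ fun q : Fin n => Nmin n hn (q + 1) k Y := by
    simp only [Nmin_mul_unitriangular hn hu (by omega : 1 ≤ k)]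
    exact Nmin_succ_unitriangular_mul hn hu.inv k Y
  rw [Pmin_eq_dotProduct hn hkn, Pmin_eq_dotProduct hn hkn, hM, hN, ← dotProduct_mulVec,
    mulVec_mulVec, mul_nonsing_inv _ (by simp [hu.det_eq_one]), one_mulVec]
end

section
/- Over a field K, the set of n×n matrices of the form u·S·u⁻¹ with u upper unitriangular and S supported on and below the anti-diagonal (S_{ij} = 0 for i+j ≤ n) is Zariski-dense in the space Mat(n) of all n×n matrices. -/
open Matrix BigOperators

section Helpers

variable {F : Type*} [CommRing F] {n : ℕ}

lemma det_of_unitriangular {u : Matrix (Fin n) (Fin n) F} (hu : IsUnitriangular u) :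
    u.det = 1 := by
  rw [Matrix.det_of_upperTriangular (fun i j h => hu.2 i j h)]
  simp [hu.1]

lemma det_of_lowerUnitriangular {l : Matrix (Fin n) (Fin n) F}
    (h1 : ∀ i, l i i = 1) (h0 : ∀ i j : Fin n, i < j → l i j = 0) :
    l.det = 1 := by
  rw [Matrix.det_of_lowerTriangular l (fun i j h => h0 i j h)]
  simp [h1]

lemma inv_eq_adjugate_of_unitriangular {u : Matrix (Fin n) (Fin n) F}
    (hu : IsUnitriangular u) : u⁻¹ = u.adjugate := by
  rw [Matrix.inv_def, det_of_unitriangular hu, Ring.inverse_one, one_smul]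

end Helpers

lemma lu_exists {F : Type*} [Field F] :
    ∀ (n : ℕ) (M : Matrix (Fin n) (Fin n) F),
      (∀ (k : ℕ) (hk : k ≤ n),
        (M.submatrix (Fin.castLE hk) (Fin.castLE hk)).det ≠ 0) →
      ∃ l u : Matrix (Fin n) (Fin n) F,
        (∀ i, l i i = 1) ∧ (∀ i j : Fin n, i < j → l i j = 0) ∧
        (∀ i j : Fin n, j < i → u i j = 0) ∧ M = l * u := by
  intro n
  induction n with
  | zero =>
      intro M _
      exact ⟨1, 1, fun i => i.elim0, fun i => i.elim0, fun i => i.elim0,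
        by ext i j; exact i.elim0⟩
  | succ m ih =>
      intro M h
      set D : Matrix (Fin m) (Fin m) F := M.submatrix Fin.castSucc Fin.castSucc with hDdef
      have hD : ∀ (k : ℕ) (hk : k ≤ m),
          (D.submatrix (Fin.castLE hk) (Fin.castLE hk)).det ≠ 0 := by
        intro k hk
        have hcomp : (Fin.castSucc ∘ Fin.castLE hk) = Fin.castLE (hk.trans m.le_succ) := by
          funext a; ext; rfl
        rw [hDdef, Matrix.submatrix_submatrix, hcomp]
        exact h k _
      obtain ⟨l₀, u₀, hl₀d, hl₀, hu₀, hMD⟩ := ih D hD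
      have hl₀det : l₀.det = 1 := det_of_lowerUnitriangular hl₀d hl₀
      have hl₀u : IsUnit l₀.det := by rw [hl₀det]; exact isUnit_one
      have hDdet : D.det ≠ 0 := by
        have hDeq : D = M.submatrix (Fin.castLE m.le_succ) (Fin.castLE m.le_succ) := by
          ext i j; rfl
        rw [hDeq]; exact h m m.le_succ
      have hu₀u : IsUnit u₀.det := by
        refine isUnit_iff_ne_zero.mpr (fun h0 => hDdet ?_)
        rw [hMD, Matrix.det_mul, h0, mul_zero]
      set bcol : Matrix (Fin m) (Fin 1) F :=
        Matrix.of (fun i _ => M i.castSucc (Fin.last m)) with hbcol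
      set crow : Matrix (Fin 1) (Fin m) F :=
        Matrix.of (fun _ j => M (Fin.last m) j.castSucc) with hcrow
      set y : Matrix (Fin m) (Fin 1) F := l₀⁻¹ * bcol with hy
      set x : Matrix (Fin 1) (Fin m) F := crow * u₀⁻¹ with hx
      set z : Matrix (Fin 1) (Fin 1) F :=
        Matrix.of (fun _ _ => M (Fin.last m) (Fin.last m) - (x * y) 0 0) with hz
      set e : Fin m ⊕ Fin 1 ≃ Fin (m + 1) := finSumFinEquiv with he
      have hsymm_cast : ∀ i₀ : Fin m, e.symm i₀.castSucc = Sum.inl i₀ := fun i₀ =>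
        finSumFinEquiv_symm_apply_castAdd i₀
      have hsymm_last : e.symm (Fin.last m) = Sum.inr 0 := finSumFinEquiv_symm_last
      refine ⟨(Matrix.fromBlocks l₀ 0 x 1).submatrix e.symm e.symm,
        (Matrix.fromBlocks u₀ y 0 z).submatrix e.symm e.symm, ?_, ?_, ?_, ?_⟩
      · intro i
        rcases Fin.eq_castSucc_or_eq_last i with ⟨i₀, rfl⟩ | rfl
        · simp [hsymm_cast, hl₀d]
        · simp [hsymm_last, Matrix.one_apply]
      · intro i j hij
        rcases Fin.eq_castSucc_or_eq_last i with ⟨i₀, rfl⟩ | rfl <;>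
          rcases Fin.eq_castSucc_or_eq_last j with ⟨j₀, rfl⟩ | rfl
        · have : i₀ < j₀ := by
            rwa [Fin.castSucc_lt_castSucc_iff] at hij
          simp [hsymm_cast, hl₀ _ _ this]
        · simp [hsymm_cast, hsymm_last]
        · exact absurd hij (lt_asymm (Fin.castSucc_lt_last j₀))
        · exact absurd hij (lt_irrefl _)
      · intro i j hij
        rcases Fin.eq_castSucc_or_eq_last i with ⟨i₀, rfl⟩ | rfl <;>
          rcases Fin.eq_castSucc_or_eq_last j with ⟨j₀, rfl⟩ | rfl
        · have : j₀ < i₀ := by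
            rwa [Fin.castSucc_lt_castSucc_iff] at hij
          simp [hsymm_cast, hu₀ _ _ this]
        · exact absurd hij (lt_asymm (Fin.castSucc_lt_last i₀))
        · simp [hsymm_cast, hsymm_last]
        · exact absurd hij (lt_irrefl _)
      · rw [Matrix.submatrix_mul_equiv (e₂ := e.symm)]
        have hblocks : Matrix.fromBlocks l₀ 0 x 1 * Matrix.fromBlocks u₀ y 0 z =
            Matrix.fromBlocks D bcol crow
              (Matrix.of fun _ _ => M (Fin.last m) (Fin.last m)) := by
          rw [Matrix.fromBlocks_multiply]
          have h11 : l₀ * u₀ + (0 : Matrix (Fin m) (Fin 1) F) * (0 : Matrix (Fin 1) (Fin m) F) = D := by rw [Matrix.mul_zero, add_zero, hMD]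
          have h12 : l₀ * y + (0 : Matrix (Fin m) (Fin 1) F) * z = bcol := by
            rw [Matrix.zero_mul, add_zero, hy, ← Matrix.mul_assoc,
              Matrix.mul_nonsing_inv _ hl₀u, Matrix.one_mul]
          have h21 : x * u₀ + (1 : Matrix (Fin 1) (Fin 1) F) * (0 : Matrix (Fin 1) (Fin m) F) = crow := by
            rw [Matrix.mul_zero, add_zero, hx, Matrix.mul_assoc,
              Matrix.nonsing_inv_mul _ hu₀u, Matrix.mul_one]
          have h22 : x * y + (1 : Matrix (Fin 1) (Fin 1) F) * z =
              Matrix.of (fun _ _ => M (Fin.last m) (Fin.last m)) := by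
            rw [Matrix.one_mul]
            ext i j
            have hi : i = 0 := Subsingleton.elim i 0
            have hj : j = 0 := Subsingleton.elim j 0
            subst hi; subst hj
            simp [hz]
          rw [h11, h12, h21, h22]
        rw [hblocks]
        ext i j
        rcases Fin.eq_castSucc_or_eq_last i with ⟨i₀, rfl⟩ | rfl <;>
          rcases Fin.eq_castSucc_or_eq_last j with ⟨j₀, rfl⟩ | rfl <;>
          simp [hsymm_cast, hsymm_last, hDdef, hbcol, hcrow]

lemma map_conj_adjugate {T T' : Type*} [CommRing T] [CommRing T'] {n : ℕ}
    (φ : T →+* T') (u S : Matrix (Fin n) (Fin n) T) :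
    (u * S * u.adjugate).map φ = (u.map φ) * (S.map φ) * (u.map φ).adjugate := by
  rw [Matrix.map_mul (f := φ), Matrix.map_mul (f := φ)]
  congr 1
  have := φ.map_adjugate u
  simpa [RingHom.mapMatrix_apply] using this

lemma map_conj_adjugate' {K T T' : Type*} [CommSemiring K] [CommRing T] [CommRing T']
    [Algebra K T] [Algebra K T'] {n : ℕ}
    (φ : T →ₐ[K] T') (u S : Matrix (Fin n) (Fin n) T) :
    (u * S * u.adjugate).map ⇑φ = (u.map ⇑φ) * (S.map ⇑φ) * (u.map ⇑φ).adjugate :=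
  map_conj_adjugate φ.toRingHom u S


noncomputable def genU (K : Type*) [Field K] (n : ℕ) :
    Matrix (Fin n) (Fin n) (MvPolynomial ((Fin n × Fin n) ⊕ (Fin n × Fin n)) K) :=
  Matrix.of (fun i j => if i = j then 1 else if j < i then 0 else
    MvPolynomial.X (Sum.inl (i, j)))

noncomputable def genS (K : Type*) [Field K] (n : ℕ) :
    Matrix (Fin n) (Fin n) (MvPolynomial ((Fin n × Fin n) ⊕ (Fin n × Fin n)) K) :=
  Matrix.of (fun a b => if a.val + b.val + 2 ≤ n then 0 else
    MvPolynomial.X (Sum.inr (a, b)))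

noncomputable def genQ {K : Type*} [Field K] {n : ℕ}
    (f : MvPolynomial (Fin n × Fin n) K) :
    MvPolynomial ((Fin n × Fin n) ⊕ (Fin n × Fin n)) K :=
  MvPolynomial.aeval
    (fun p : Fin n × Fin n => (genU K n * genS K n * (genU K n).adjugate) p.1 p.2) f

lemma genQ_nat {K : Type*} [Field K] {n : ℕ}
    (f : MvPolynomial (Fin n × Fin n) K)
    {T : Type*} [CommRing T] [Algebra K T]
    (φ : MvPolynomial ((Fin n × Fin n) ⊕ (Fin n × Fin n)) K →ₐ[K] T) :
    φ (genQ f) = MvPolynomial.aeval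
      (fun p : Fin n × Fin n =>
        (((genU K n).map φ) * ((genS K n).map φ) * ((genU K n).map φ).adjugate) p.1 p.2) f := by
  rw [genQ, MvPolynomial.comp_aeval_apply]
  have hgg : (fun i : Fin n × Fin n =>
      φ ((genU K n * genS K n * (genU K n).adjugate) i.1 i.2)) = (fun p : Fin n × Fin n =>
      (((genU K n).map φ) * ((genS K n).map φ) * ((genU K n).map φ).adjugate) p.1 p.2) := by
    funext p
    have h' : φ ((genU K n * genS K n * (genU K n).adjugate) p.1 p.2)
        = ((genU K n * genS K n * (genU K n).adjugate).map φ) p.1 p.2 := rfl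
    rw [h', map_conj_adjugate' φ]
  rw [hgg]

lemma key_vanish {K : Type*} [Field K] [Infinite K] (n : ℕ)
    (f : MvPolynomial (Fin n × Fin n) K)
    (hf : ∀ u S : Matrix (Fin n) (Fin n) K, IsUnitriangular u →
      (∀ a b : Fin n, a.val + b.val + 2 ≤ n → S a b = 0) →
      MvPolynomial.eval (fun p => (u * S * u⁻¹) p.1 p.2) f = 0)
    {F : Type*} [CommRing F] [Algebra K F]
    (u S : Matrix (Fin n) (Fin n) F) (hu : IsUnitriangular u)
    (hS : ∀ a b : Fin n, a.val + b.val + 2 ≤ n → S a b = 0) :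
    MvPolynomial.aeval (fun p : Fin n × Fin n => (u * S * u.adjugate) p.1 p.2) f = 0 := by
  classical
  have hq0 : genQ f = 0 := by
    apply MvPolynomial.funext
    intro xx
    have key : (MvPolynomial.aeval (R := K) xx) (genQ f) = 0 := by
      rw [genQ_nat f (MvPolynomial.aeval (R := K) xx)]
      set uK : Matrix (Fin n) (Fin n) K := (genU K n).map (MvPolynomial.aeval xx) with huK
      set SK : Matrix (Fin n) (Fin n) K := (genS K n).map (MvPolynomial.aeval xx) with hSK
      have huKt : IsUnitriangular uK := by
        constructor
        · intro i; simp [huK, genU, Matrix.map_apply]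
        · intro i j hij
          have hne : ¬ i = j := (ne_of_gt hij)
          simp [huK, genU, Matrix.map_apply, hne, hij]
      have hSKt : ∀ a b : Fin n, a.val + b.val + 2 ≤ n → SK a b = 0 := by
        intro a b hab
        simp [hSK, genS, Matrix.map_apply, hab]
      have hthis := hf uK SK huKt hSKt
      rw [inv_eq_adjugate_of_unitriangular huKt] at hthis
      exact hthis
    calc MvPolynomial.eval xx (genQ f) = (MvPolynomial.aeval (R := K) xx) (genQ f) := rfl
      _ = 0 := key
      _ = MvPolynomial.eval xx 0 := by rw [map_zero]
  set v : ((Fin n × Fin n) ⊕ (Fin n × Fin n)) → F :=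
    Sum.elim (fun p => u p.1 p.2) (fun p => S p.1 p.2) with hv
  have h1 : (genU K n).map (MvPolynomial.aeval (R := K) v) = u := by
    ext i j
    by_cases hij : i = j
    · subst hij; simp [genU, Matrix.map_apply, hu.1]
    · by_cases hlt : j < i
      · simp [genU, Matrix.map_apply, hij, hlt, hu.2 i j hlt]
      · simp [genU, Matrix.map_apply, hij, hlt, hv]
  have h2 : (genS K n).map (MvPolynomial.aeval (R := K) v) = S := by
    ext a b
    by_cases hab : a.val + b.val + 2 ≤ n
    · simp [genS, Matrix.map_apply, hab, (hS a b hab).symm]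
    · simp [genS, Matrix.map_apply, hab, hv]
  have hfin := genQ_nat f (MvPolynomial.aeval (R := K) v)
  rw [hq0, map_zero] at hfin
  rw [h1, h2] at hfin
  exact hfin.symm

/-- the set `⋃_{u ∈ UT(n)} u·𝒮·u⁻¹`, where `𝒮` is the space of matrices
supported on and below the anti-diagonal, is Zariski-dense in `Mat(n)`: every polynomial
function vanishing on it vanishes identically. -/
theorem conj_antitriangular_zariski_dense {K : Type*} [Field K] [Infinite K]
    (n : ℕ) (hn : 0 < n)
    (f : MvPolynomial (Fin n × Fin n) K)
    (hf : ∀ u S : Matrix (Fin n) (Fin n) K, IsUnitriangular u →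
      (∀ a b : Fin n, a.val + b.val + 2 ≤ n → S a b = 0) →
      MvPolynomial.eval (fun p => (u * S * u⁻¹) p.1 p.2) f = 0) :
    f = 0 := by
  classical
  letI : Algebra K (FractionRing (MvPolynomial (Fin n × Fin n) K)) :=
    ((algebraMap (MvPolynomial (Fin n × Fin n) K)
        (FractionRing (MvPolynomial (Fin n × Fin n) K))).comp
      (algebraMap K (MvPolynomial (Fin n × Fin n) K))).toAlgebra
  set Xg : Matrix (Fin n) (Fin n) (FractionRing (MvPolynomial (Fin n × Fin n) K)) :=
    Matrix.of (fun a b => algebraMap (MvPolynomial (Fin n × Fin n) K) (FractionRing (MvPolynomial (Fin n × Fin n) K)) (MvPolynomial.X (a, b))) with hXg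
  set M' : Matrix (Fin n) (Fin n) (FractionRing (MvPolynomial (Fin n × Fin n) K)) := Xg.submatrix Fin.rev id with hM'
  have hminor : ∀ (k : ℕ) (hk : k ≤ n),
      (M'.submatrix (Fin.castLE hk) (Fin.castLE hk)).det ≠ 0 := by
    intro k hk
    set Qk : Matrix (Fin k) (Fin k) (MvPolynomial (Fin n × Fin n) K) :=
      Matrix.of (fun a b =>
        MvPolynomial.X ((Fin.castLE hk a).rev, Fin.castLE hk b)) with hQk
    have hsub : M'.submatrix (Fin.castLE hk) (Fin.castLE hk)
        = Qk.map (algebraMap (MvPolynomial (Fin n × Fin n) K) (FractionRing (MvPolynomial (Fin n × Fin n) K))) := by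
      ext a b; rfl
    have hdet : (Qk.map (algebraMap (MvPolynomial (Fin n × Fin n) K) (FractionRing (MvPolynomial (Fin n × Fin n) K)))).det = algebraMap (MvPolynomial (Fin n × Fin n) K) (FractionRing (MvPolynomial (Fin n × Fin n) K)) Qk.det := by
      rw [RingHom.map_det]; rfl
    rw [hsub, hdet, map_ne_zero_iff _ (IsFractionRing.injective (MvPolynomial (Fin n × Fin n) K) (FractionRing (MvPolynomial (Fin n × Fin n) K)))]
    intro h0
    set w : Fin n × Fin n → K :=
      fun p => if p.1.val + p.2.val = n - 1 then (1 : K) else 0 with hw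
    have heval : MvPolynomial.eval w Qk.det = (Qk.map (MvPolynomial.eval w)).det := by
      rw [RingHom.map_det]; rfl
    have hid : Qk.map (MvPolynomial.eval w) = (1 : Matrix (Fin k) (Fin k) K) := by
      ext a b
      have ha : (a : ℕ) < n := lt_of_lt_of_le a.isLt hk
      have hb : (b : ℕ) < n := lt_of_lt_of_le b.isLt hk
      have hentry : (Qk.map (MvPolynomial.eval w)) a b
          = if n - ((a : ℕ) + 1) + (b : ℕ) = n - 1 then (1 : K) else 0 := by
        simp only [hQk, Matrix.map_apply, Matrix.of_apply, MvPolynomial.eval_X, hw,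
          Fin.val_rev, Fin.coe_castLE]
      rw [hentry, Matrix.one_apply]
      by_cases hab : a = b
      · subst hab
        rw [if_pos (by omega), if_pos rfl]
      · have hvne : (a : ℕ) ≠ (b : ℕ) := fun h => hab (Fin.ext h)
        rw [if_neg (by omega), if_neg hab]
    have hone := congrArg (MvPolynomial.eval w) h0
    rw [map_zero, heval, hid, Matrix.det_one] at hone
    exact one_ne_zero hone
  obtain ⟨l, u₁, hld, hl, hu₁, hMlu⟩ := lu_exists n M' hminor
  set U : Matrix (Fin n) (Fin n) (FractionRing (MvPolynomial (Fin n × Fin n) K)) := l.submatrix Fin.rev Fin.rev with hU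
  set Lw : Matrix (Fin n) (Fin n) (FractionRing (MvPolynomial (Fin n × Fin n) K)) := u₁.submatrix Fin.rev Fin.rev with hLw
  have hUtri : IsUnitriangular U := by
    constructor
    · intro i; exact hld _
    · intro i j hij
      exact hl _ _ (by rwa [Fin.rev_lt_rev])
  have hLwlow : ∀ i j : Fin n, i < j → Lw i j = 0 := fun i j hij =>
    hu₁ _ _ (by rwa [Fin.rev_lt_rev])
  have hsplit : U * Lw = Xg.submatrix id Fin.rev := by
    have hkey : l.submatrix Fin.rev Fin.rev * u₁.submatrix Fin.rev Fin.rev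
        = (l * u₁).submatrix Fin.rev Fin.rev :=
      Matrix.submatrix_mul_equiv l u₁ Fin.rev Fin.revPerm Fin.rev
    rw [hU, hLw, hkey, ← hMlu, hM']
    ext i j
    simp [Matrix.submatrix_apply, Fin.rev_rev]
  set S : Matrix (Fin n) (Fin n) (FractionRing (MvPolynomial (Fin n × Fin n) K)) := Lw * (U.submatrix Fin.rev id) with hSdef
  have hSanti : ∀ a b : Fin n, a.val + b.val + 2 ≤ n → S a b = 0 := by
    intro a b hab
    rw [hSdef, Matrix.mul_apply]
    apply Finset.sum_eq_zero
    intro k _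
    by_cases hk : a < k
    · rw [hLwlow a k hk, zero_mul]
    · have hk' : (k : ℕ) ≤ (a : ℕ) := Nat.not_lt.mp (fun h => hk h)
      have hblt : b < Fin.rev k := by
        rw [Fin.lt_def, Fin.val_rev]
        have := k.isLt
        omega
      have hz : U.submatrix Fin.rev id k b = 0 := hUtri.2 _ _ hblt
      rw [hz, mul_zero]
  have hXid : U * S * U.adjugate = Xg := by
    rw [hSdef, ← Matrix.mul_assoc U Lw _, hsplit]
    have h2 : Xg.submatrix id Fin.rev * U.submatrix Fin.rev id = Xg * U := by
      have h3 := Matrix.submatrix_mul_equiv Xg U id Fin.revPerm id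
      rw [Matrix.submatrix_id_id] at h3
      exact h3
    rw [h2, Matrix.mul_assoc, Matrix.mul_adjugate, det_of_unitriangular hUtri,
      one_smul, Matrix.mul_one]
  have h0 := key_vanish n f hf U S hUtri hSanti
  rw [hXid] at h0
  have halg : MvPolynomial.aeval (R := K) (fun p : Fin n × Fin n => Xg p.1 p.2) f
      = algebraMap (MvPolynomial (Fin n × Fin n) K) (FractionRing (MvPolynomial (Fin n × Fin n) K)) f := by
    have h1 : algebraMap (MvPolynomial (Fin n × Fin n) K) (FractionRing (MvPolynomial (Fin n × Fin n) K)) f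
        = algebraMap (MvPolynomial (Fin n × Fin n) K) (FractionRing (MvPolynomial (Fin n × Fin n) K)) (MvPolynomial.eval₂ MvPolynomial.C MvPolynomial.X f) := by
      rw [MvPolynomial.eval₂_eta]
    have hc : (algebraMap K (FractionRing (MvPolynomial (Fin n × Fin n) K))) = (algebraMap (MvPolynomial (Fin n × Fin n) K) (FractionRing (MvPolynomial (Fin n × Fin n) K))).comp (MvPolynomial.C) := by
      rw [show (MvPolynomial.C : K →+* MvPolynomial (Fin n × Fin n) K) = algebraMap K (MvPolynomial (Fin n × Fin n) K) from
        (MvPolynomial.algebraMap_eq K (Fin n × Fin n)).symm]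
      rfl
    have hfun : (fun p : Fin n × Fin n => Xg p.1 p.2)
        = (⇑(algebraMap (MvPolynomial (Fin n × Fin n) K) (FractionRing (MvPolynomial (Fin n × Fin n) K))) ∘ MvPolynomial.X) := by
      funext p; rfl
    rw [h1, MvPolynomial.eval₂_comp_left (algebraMap (MvPolynomial (Fin n × Fin n) K) (FractionRing (MvPolynomial (Fin n × Fin n) K)))
      MvPolynomial.C MvPolynomial.X f, MvPolynomial.aeval_def, hc, hfun]
  rw [halg] at h0
  have hfin : algebraMap (MvPolynomial (Fin n × Fin n) K) (FractionRing (MvPolynomial (Fin n × Fin n) K)) f = algebraMap (MvPolynomial (Fin n × Fin n) K) (FractionRing (MvPolynomial (Fin n × Fin n) K)) 0 := by rw [map_zero, h0]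
  exact IsFractionRing.injective (MvPolynomial (Fin n × Fin n) K) (FractionRing (MvPolynomial (Fin n × Fin n) K)) hfin
end

section
/- Let π : K[Mat(n)]^{UT(n)} → K[𝒮] be the restriction of UT(n)-invariant polynomial functions on Mat(n) (for the conjugation action) to the anti-triangular subspace 𝒮. Then π is injective. -/
/-!
If the row-reversed matrix `J X` has nonzero leading principal minors, Gaussian elimination
without pivoting gives a lower unitriangular `L` with `L (J X)` upper triangular. The conjugate
of `X` by the upper unitriangular `u = J L J` is then `J (L J X) u⁻¹`, which is anti-triangular.
Hence two invariants agreeing on `𝒮` agree off the hypersurface where the product `q` of these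
minors vanishes. Since `q` is `1` at the anti-identity, it is a nonzero polynomial, and over an
infinite field a polynomial vanishing wherever `q` does not is zero.
-/

open Matrix BigOperators

namespace Matrix

variable {ι R K : Type*} [Fintype ι] [LinearOrder ι]

def leadingMinor [CommRing R] (B : Matrix ι ι R) (i : ι) : R :=
  (B.submatrix (Subtype.val : {j // j < i} → ι) Subtype.val).det

theorem leadingMinor_one [CommRing R] (i : ι) : (1 : Matrix ι ι R).leadingMinor i = 1 := by
  rw [leadingMinor, submatrix_one _ Subtype.val_injective, det_one]

theorem _root_.RingHom.map_leadingMinor {S : Type*} [CommRing R] [CommRing S] (f : R →+* S)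
    (B : Matrix ι ι R) (i : ι) : f (B.leadingMinor i) = (f.mapMatrix B).leadingMinor i := by
  rw [leadingMinor, RingHom.map_det]; rfl

theorem exists_lowerUnitriangular_mul_upperTriangular [Field K] (B : Matrix ι ι K)
    (hB : ∀ i, B.leadingMinor i ≠ 0) :
    ∃ L : Matrix ι ι K, L.BlockTriangular OrderDual.toDual ∧ (∀ i, L i i = 1) ∧
      (L * B).BlockTriangular id := by
  have hsolve (i : ι) : ∃ c : {j // j < i} → K,
      c ᵥ* B.submatrix Subtype.val Subtype.val = fun j : {j // j < i} => B i j :=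
    vecMul_surjective_iff_isUnit.2 ((isUnit_iff_isUnit_det _).2 (hB i).isUnit) _
  choose c hc using hsolve
  -- row `i` of `N * B` agrees with row `i` of `B` strictly left of the diagonal
  let N : Matrix ι ι K := of fun i j => if h : j < i then c i ⟨j, h⟩ else 0
  have hNB : ∀ i k, k < i → (N * B) i k = B i k := fun i k hki => by
    calc (N * B) i k
        = ∑ j : {j // j < i}, N i j * B j k + ∑ j : {j // ¬j < i}, N i j * B j k :=
          (Fintype.sum_subtype_add_sum_subtype _ _).symm
      _ = ∑ j : {j // j < i}, c i j * B j k + 0 := by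
          congr 1
          · exact Finset.sum_congr rfl fun j _ => by simp [N, j.2]
          · exact Finset.sum_eq_zero fun j _ => by simp [N, j.2]
      _ = B i k := by rw [add_zero]; exact congrFun (hc i) ⟨k, hki⟩
  refine ⟨1 - N, fun i j hij => ?_, fun i => by simp [N], fun i k hki => ?_⟩
  · have hij : i < j := hij
    simp [N, hij.ne, hij.not_gt]
  · simp [sub_mul, hNB i k hki]

end Matrix

theorem MvPolynomial.eq_zero_of_eval_eq_zero_of_eval_ne_zero {σ R : Type*} [CommRing R]
    [IsDomain R] [Infinite R] {p q : MvPolynomial σ R} (hq : q ≠ 0)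
    (h : ∀ x, eval x q ≠ 0 → eval x p = 0) : p = 0 := by
  have hpq : p * q = 0 := funext fun x => by
    by_cases hx : eval x q = 0 <;> simp [hx, h]
  exact (mul_eq_zero.1 hpq).resolve_right hq

theorem exists_isUnitriangular_conj_antitriangular {K : Type*} [Field K] {n : ℕ}
    (X : Matrix (Fin n) (Fin n) K) (hX : ∀ i, (X.submatrix Fin.rev id).leadingMinor i ≠ 0) :
    ∃ u : Matrix (Fin n) (Fin n) K, IsUnitriangular u ∧
      ∀ a b : Fin n, a.val + b.val + 2 ≤ n → (u * X * u⁻¹) a b = 0 := by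
  obtain ⟨L, hL_lower, hL_diag, hLX⟩ := exists_lowerUnitriangular_mul_upperTriangular _ hX
  set u := L.submatrix Fin.rev Fin.rev
  have hu : IsUnitriangular u :=
    ⟨fun i => hL_diag _, fun i j hji => hL_lower (by simpa [Fin.rev_lt_rev] using hji)⟩
  have hu_upper : u.BlockTriangular id := hu.2
  have : Invertible u := invertibleOfIsUnitDet u (by
    rw [det_of_isUpperTriangular hu_upper, Finset.prod_eq_one fun i _ => hu.1 i]; exact isUnit_one)
  have hconj : (u * X * u⁻¹).submatrix Fin.rev id = L * X.submatrix Fin.rev id * u⁻¹ := by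
    rw [submatrix_mul _ _ _ id _ Function.bijective_id,
      submatrix_mul _ _ _ Fin.rev _ Fin.rev_bijective]
    simp [u, Fin.rev_involutive.comp_self]
  have htri := hconj ▸ hLX.mul (blockTriangular_inv_of_blockTriangular hu_upper)
  refine ⟨u, hu, fun a b hab => ?_⟩
  have hba : b < Fin.rev a := by rw [Fin.lt_def, Fin.val_rev]; omega
  simpa using htri (i := Fin.rev a) (j := b) hba

theorem exists_ne_zero_forall_eval_ne_zero_exists_conj_antitriangular {K : Type*} [Field K]
    (n : ℕ) : ∃ q : MvPolynomial (Fin n × Fin n) K, q ≠ 0 ∧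
      ∀ x, MvPolynomial.eval x q ≠ 0 → ∃ u : Matrix (Fin n) (Fin n) K, IsUnitriangular u ∧
        ∀ a b : Fin n, a.val + b.val + 2 ≤ n →
          (u * of (fun a b => x (a, b)) * u⁻¹) a b = 0 := by
  let q : MvPolynomial (Fin n × Fin n) K :=
    ∏ i, ((of fun a b => MvPolynomial.X (a, b)).submatrix Fin.rev id).leadingMinor i
  have heval (x : Fin n × Fin n → K) : MvPolynomial.eval x q =
      ∏ i, ((of fun a b => x (a, b)).submatrix Fin.rev id).leadingMinor i := by
    simp only [q, map_prod, RingHom.map_leadingMinor, RingHom.mapMatrix_apply, ← submatrix_map]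
    congr! 4
    ext a b
    simp
  refine ⟨q, fun hq0 => ?_, fun x hx => ?_⟩
  · have hJ : (of fun a b => (1 : Matrix (Fin n) (Fin n) K) (Fin.rev a) b).submatrix Fin.rev id
        = 1 := by
      ext a b
      simp only [submatrix_apply, of_apply, id]
      rw [Fin.rev_rev]
    have h := heval fun p => (1 : Matrix (Fin n) (Fin n) K) (Fin.rev p.1) p.2
    simp only [hq0, map_zero, hJ, leadingMinor_one, Finset.prod_const_one] at h
    exact zero_ne_one h
  · rw [heval, Finset.prod_ne_zero_iff] at hx
    exact exists_isUnitriangular_conj_antitriangular _ fun i => hx i (Finset.mem_univ i)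

theorem restriction_to_antitriangular_injective_general {K : Type*} [Field K] [Infinite K]
    (n : ℕ)
    (f g : MvPolynomial (Fin n × Fin n) K)
    (hf : ∀ u X : Matrix (Fin n) (Fin n) K, IsUnitriangular u →
      MvPolynomial.eval (fun p => (u * X * u⁻¹) p.1 p.2) f =
        MvPolynomial.eval (fun p => X p.1 p.2) f)
    (hg : ∀ u X : Matrix (Fin n) (Fin n) K, IsUnitriangular u →
      MvPolynomial.eval (fun p => (u * X * u⁻¹) p.1 p.2) g =
        MvPolynomial.eval (fun p => X p.1 p.2) g)
    (hfg : ∀ S : Matrix (Fin n) (Fin n) K,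
      (∀ a b : Fin n, a.val + b.val + 2 ≤ n → S a b = 0) →
      MvPolynomial.eval (fun p => S p.1 p.2) f =
        MvPolynomial.eval (fun p => S p.1 p.2) g) :
    f = g := by
  obtain ⟨q, hq, hconj⟩ :=
    exists_ne_zero_forall_eval_ne_zero_exists_conj_antitriangular (K := K) n
  refine sub_eq_zero.1 (MvPolynomial.eq_zero_of_eval_eq_zero_of_eval_ne_zero hq fun x hx => ?_)
  obtain ⟨u, hu, hS⟩ := hconj x hx
  have hx_eq : x = fun p => of (fun a b => x (a, b)) p.1 p.2 := rfl
  rw [hx_eq, map_sub, ← hf u _ hu, ← hg u _ hu, hfg _ hS, sub_self]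

/-- the restriction map `π : K[Mat(n)]^{UT(n)} → K[𝒮]` of unitriangular
conjugation invariants to the anti-triangular subspace `𝒮` is injective. -/
theorem restriction_to_antitriangular_injective {K : Type*} [Field K] [Infinite K]
    (n : ℕ) (hn : 0 < n)
    (f g : MvPolynomial (Fin n × Fin n) K)
    (hf : ∀ u X : Matrix (Fin n) (Fin n) K, IsUnitriangular u →
      MvPolynomial.eval (fun p => (u * X * u⁻¹) p.1 p.2) f =
        MvPolynomial.eval (fun p => X p.1 p.2) f)
    (hg : ∀ u X : Matrix (Fin n) (Fin n) K, IsUnitriangular u →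
      MvPolynomial.eval (fun p => (u * X * u⁻¹) p.1 p.2) g =
        MvPolynomial.eval (fun p => X p.1 p.2) g)
    (hfg : ∀ S : Matrix (Fin n) (Fin n) K,
      (∀ a b : Fin n, a.val + b.val + 2 ≤ n → S a b = 0) →
      MvPolynomial.eval (fun p => S p.1 p.2) f =
        MvPolynomial.eval (fun p => S p.1 p.2) g) :
    f = g :=
  restriction_to_antitriangular_injective_general n f g hf hg hfg
end

section
/- The n(n+1)/2 polynomials consisting of {P_{ik}(X) : n−i+1 < k ≤ n} together with the corner minors {D_k(X) : 1 ≤ k ≤ n} are algebraically independent over K. -/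
open Matrix BigOperators

/-- The generic `n × n` matrix, whose entries are independent indeterminates. -/
noncomputable def Xgen (K : Type*) [CommRing K] (n : ℕ) :
    Matrix (Fin n) (Fin n) (MvPolynomial (Fin n × Fin n) K) :=
  Matrix.of fun a b => MvPolynomial.X (a, b)

/-- sign of the reversal permutation, as an element of F -/
noncomputable def epsF (F : Type*) [Field F] (m : ℕ) : F :=
  ((Equiv.Perm.sign (Fin.revPerm : Equiv.Perm (Fin m)) : ℤ) : F)

lemma epsF_mul_self (F : Type*) [Field F] (m : ℕ) : epsF F m * epsF F m = 1 := by
  unfold epsF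
  rw [← Int.cast_mul, ← Units.val_mul, Int.units_mul_self]
  norm_num

lemma epsF_ne_zero (F : Type*) [Field F] (m : ℕ) : epsF F m ≠ 0 :=
  left_ne_zero_of_mul_eq_one (epsF_mul_self F m)

lemma epsF_zero (F : Type*) [Field F] : epsF F 0 = 1 := by
  unfold epsF
  have : (Fin.revPerm : Equiv.Perm (Fin 0)) = 1 := by
    ext x; exact x.elim0
  rw [this]; simp

lemma det_antitriangular {F : Type*} [Field F] {m : ℕ} (B : Matrix (Fin m) (Fin m) F)
    (h : ∀ a b : Fin m, (a : ℕ) + (b : ℕ) + 1 < m → B a b = 0) :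
    B.det = epsF F m * ∏ a, B a a.rev := by
  have h2 : (B.submatrix id Fin.revPerm).BlockTriangular OrderDual.toDual := by
    intro i j hij
    have hij2 : i < j := OrderDual.toDual_lt_toDual.mp hij
    have hij' : (i : ℕ) < (j : ℕ) := hij2
    have hj := j.is_lt
    apply h
    simp only [id_eq, Fin.revPerm_apply, Fin.val_rev]
    omega
  have h3 := Matrix.det_of_lowerTriangular _ h2
  have h4 := Matrix.det_permute' Fin.revPerm B
  rw [h3] at h4
  have h5 : ∀ a : Fin m, (B.submatrix id Fin.revPerm) a a = B a a.rev := fun a => rfl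
  rw [Finset.prod_congr rfl (fun a _ => h5 a)] at h4
  have := epsF_mul_self F m
  unfold epsF at this ⊢
  calc B.det = (((Equiv.Perm.sign (Fin.revPerm : Equiv.Perm (Fin m)) : ℤ) : F) *
      ((Equiv.Perm.sign (Fin.revPerm : Equiv.Perm (Fin m)) : ℤ) : F)) * B.det := by
        rw [this, one_mul]
    _ = _ := by rw [mul_assoc, ← h4]

/-- antidiagonal entry value -/
noncomputable def yF {F : Type*} [Field F] (n : ℕ) (uu : ℕ → F) (r : ℕ) : F :=
  (epsF F (n - r) * uu (r + 1)) / (epsF F (n - r - 1) * uu (r + 2))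

/-- the substituted matrix entry, as a function of natural-number indices -/
noncomputable def gnat {F : Type*} [Field F] (n : ℕ) (uu : ℕ → F) (vv : ℕ → ℕ → F)
    (r c : ℕ) : F :=
  if r + c + 1 < n then 0
  else if r + c + 1 = n then yF n uu r
  else vv (r + 1) (c + 1) * (-1) ^ (n - 1 - r) / (uu (r + 2) * uu (c + 1))

lemma gnat_zero {F : Type*} [Field F] {n : ℕ} (uu : ℕ → F) (vv : ℕ → ℕ → F)
    {r c : ℕ} (h : r + c + 1 < n) : gnat n uu vv r c = 0 := if_pos h

lemma gnat_diag {F : Type*} [Field F] {n : ℕ} (uu : ℕ → F) (vv : ℕ → ℕ → F)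
    {r c : ℕ} (h : r + c + 1 = n) : gnat n uu vv r c = yF n uu r := by
  unfold gnat; rw [if_neg (by omega), if_pos h]

lemma gnat_low {F : Type*} [Field F] {n : ℕ} (uu : ℕ → F) (vv : ℕ → ℕ → F)
    {r c : ℕ} (h : n < r + c + 1) :
    gnat n uu vv r c = vv (r + 1) (c + 1) * (-1) ^ (n - 1 - r) / (uu (r + 2) * uu (c + 1)) := by
  unfold gnat; rw [if_neg (by omega), if_neg (by omega)]

lemma prodY {F : Type*} [Field F] {n : ℕ} (uu : ℕ → F)
    (hu : ∀ m, uu m ≠ 0) (hun : uu (n + 1) = 1) :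
    ∀ d, d ≤ n → ∏ r ∈ Finset.Ico (n - d) n, yF n uu r = epsF F d * uu (n - d + 1) := by
  intro d
  induction d with
  | zero =>
    intro _
    simp [epsF_zero, hun]
  | succ d ih =>
    intro hdn
    have h1 : n - (d + 1) < n := by omega
    rw [Finset.prod_eq_prod_Ico_succ_bot h1]
    have h2 : n - (d + 1) + 1 = n - d := by omega
    rw [h2, ih (by omega)]
    unfold yF
    have e1 : n - (n - (d + 1)) = d + 1 := by omega
    have e3 : n - (d + 1) + 1 = n - d := by omega
    have e4 : n - (d + 1) + 2 = n - d + 1 := by omega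
    rw [e1, e3, e4, Nat.add_sub_cancel,
      div_mul_cancel₀ _ (mul_ne_zero (epsF_ne_zero F d) (hu _))]

lemma cornerDet {F : Type*} [Field F] {n : ℕ} (uu : ℕ → F) (vv : ℕ → ℕ → F)
    (hu : ∀ m, uu m ≠ 0) (hun : uu (n + 1) = 1)
    (m k0 : ℕ) (hmk : k0 + m = n) :
    (Matrix.of fun a b : Fin m => gnat n uu vv (k0 + a) (b : ℕ)).det = uu (k0 + 1) := by
  have hz : ∀ a b : Fin m, (a : ℕ) + (b : ℕ) + 1 < m →
      (Matrix.of fun a b : Fin m => gnat n uu vv (k0 + a) (b : ℕ)) a b = 0 :=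
    fun a b hab => gnat_zero uu vv (by omega)
  rw [det_antitriangular _ hz]
  have hdiag : ∀ a : Fin m, gnat n uu vv (k0 + (a : ℕ)) ((Fin.rev a : ℕ)) = yF n uu (k0 + a) := by
    intro a
    have ha := a.is_lt
    exact gnat_diag uu vv (by simp only [Fin.val_rev]; omega)
  calc epsF F m * ∏ a : Fin m, (Matrix.of fun a b : Fin m =>
          gnat n uu vv (k0 + a) (b : ℕ)) a a.rev
      = epsF F m * ∏ a : Fin m, yF n uu (k0 + a) := by
        exact congrArg _ (Finset.prod_congr rfl (fun a _ => hdiag a))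
    _ = epsF F m * ∏ r ∈ Finset.Ico k0 n, yF n uu r := by
        rw [Finset.prod_Ico_eq_prod_range]
        have : n - k0 = m := by omega
        rw [this, ← Fin.prod_univ_eq_prod_range]
    _ = uu (k0 + 1) := by
        have : n - m = k0 := by omega
        rw [show (Finset.Ico k0 n) = Finset.Ico (n - m) n by rw [this],
          prodY uu hu hun m (by omega), show n - m + 1 = k0 + 1 by omega,
          ← mul_assoc, epsF_mul_self, one_mul]

lemma aux_field {F : Type*} [Field F] (t a u v : F) (hu : u ≠ 0) (hv : v ≠ 0)
    (ht : t * t = 1) : t * (a * t / (u * v)) * u * v = a := by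
  calc t * (a * t / (u * v)) * u * v = (t * t) * a * ((u * v) / (u * v)) := by ring
    _ = a := by rw [ht, div_self (mul_ne_zero hu hv)]; ring

section Eval

variable {K : Type*} [Field K] {F : Type*} [Field F] [Algebra K F]
variable (n : ℕ) (hn : 0 < n) (uu : ℕ → F) (vv : ℕ → ℕ → F)

/-- the substitution, as a function on the variable index type -/
noncomputable def gfun : Fin n × Fin n → F := fun p => gnat n uu vv p.1 p.2

variable (hu : ∀ m, uu m ≠ 0) (hun : uu (n + 1) = 1)
include hu hun

lemma Dmin_eval (k : ℕ) (hk1 : 1 ≤ k) (hk2 : k ≤ n) :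
    MvPolynomial.aeval (R := K) (gfun n uu vv) (Dmin n hn k (Xgen K n)) = uu k := by
  unfold Dmin
  rw [AlgHom.map_det]
  have hM : (Matrix.of fun a b : Fin (n - k + 1) =>
        Xgen K n (fidx n hn (k - 1 + a.val)) (fidx n hn b.val)).map
        (MvPolynomial.aeval (R := K) (gfun n uu vv))
      = Matrix.of fun a b : Fin (n - k + 1) => gnat n uu vv (k - 1 + a.val) b.val := by
    funext a b
    have ha : k - 1 + a.val < n := by have := a.is_lt; omega
    have hb : b.val < n := by have := b.is_lt; omega
    simp [Matrix.map_apply, Xgen, gfun, fidx, Nat.mod_eq_of_lt ha, Nat.mod_eq_of_lt hb]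
  rw [AlgHom.mapMatrix_apply, hM, cornerDet uu vv hu hun _ _ (by omega), show k - 1 + 1 = k by omega]

lemma Nmin_eval_zero (j k : ℕ) (hj1 : 1 ≤ j) (hjk : j < k) (hk : k ≤ n) :
    MvPolynomial.aeval (R := K) (gfun n uu vv) (Nmin n hn j k (Xgen K n)) = 0 := by
  unfold Nmin
  rw [AlgHom.map_det, AlgHom.mapMatrix_apply]
  apply Matrix.det_eq_zero_of_row_eq_zero 0
  intro b
  have h0 : ((0 : Fin (n - k + 1)) : ℕ) = 0 := rfl
  have hj : j - 1 < n := by omega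
  have hb : b.val < n := by have := b.is_lt; omega
  simp only [Matrix.map_apply, Matrix.of_apply, Xgen, h0, if_pos rfl]
  rw [MvPolynomial.aeval_X]
  show gnat n uu vv ((j - 1) % n) (b.val % n) = 0
  rw [Nat.mod_eq_of_lt hj, Nat.mod_eq_of_lt hb]
  exact gnat_zero uu vv (by have := b.is_lt; omega)

lemma Nmin_eval_diag (k : ℕ) (hk1 : 1 ≤ k) (hk2 : k ≤ n) :
    MvPolynomial.aeval (R := K) (gfun n uu vv) (Nmin n hn k k (Xgen K n)) = uu k := by
  have hND : Nmin n hn k k (Xgen K n) = Dmin n hn k (Xgen K n) := by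
    unfold Nmin Dmin
    congr 1
    funext a b
    have he : (if a.val = 0 then k - 1 else k + a.val - 1) = k - 1 + a.val := by
      rcases Nat.eq_zero_or_pos a.val with h | h
      · simp [h]
      · rw [if_neg (by omega)]; omega
    simp only [Matrix.of_apply]
    rw [he]
  rw [hND]
  exact Dmin_eval n hn uu vv hu hun k hk1 hk2

lemma Mmin_eval (i k : ℕ) (hi1 : 1 ≤ i) (hi2 : i ≤ n) (hik : n - i + 1 < k) (hk : k ≤ n) :
    MvPolynomial.aeval (R := K) (gfun n uu vv) (Mmin n hn i k (Xgen K n))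
      = (-1) ^ (n - i) * gnat n uu vv (i - 1) (k - 1) * uu (i + 1) := by
  unfold Mmin
  rw [AlgHom.map_det, AlgHom.mapMatrix_apply]
  have hM : (Matrix.of fun a b : Fin (n - i + 1) =>
        Xgen K n (fidx n hn (i - 1 + a.val))
          (fidx n hn (if b.val < n - i then b.val else k - 1))).map
        (MvPolynomial.aeval (R := K) (gfun n uu vv))
      = Matrix.of fun a b : Fin (n - i + 1) =>
          gnat n uu vv (i - 1 + a.val) (if b.val < n - i then b.val else k - 1) := by
    funext a b
    have ha : i - 1 + a.val < n := by have := a.is_lt; omega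
    have hb : (if b.val < n - i then b.val else k - 1) < n := by
      split <;> omega
    simp [Matrix.map_apply, Xgen, gfun, fidx, Nat.mod_eq_of_lt ha, Nat.mod_eq_of_lt hb]
  rw [hM, Matrix.det_succ_row_zero]
  rw [Finset.sum_eq_single_of_mem (Fin.last (n - i)) (Finset.mem_univ _)
    (fun j _ hj => by
      have hjv : j.val < n - i := by
        have h1 := j.is_lt
        have h2 : j.val ≠ n - i := fun h => hj (Fin.ext h)
        omega
      have hrow : ((0 : Fin (n - i + 1)) : ℕ) = 0 := rfl
      simp only [Matrix.of_apply, hrow, Nat.add_zero, if_pos hjv]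
      rw [gnat_zero uu vv (by omega), mul_zero, zero_mul])]
  have hlast : ((Fin.last (n - i)) : ℕ) = n - i := rfl
  have h0 : ((0 : Fin (n - i + 1)) : ℕ) = 0 := rfl
  have hsub : ((Matrix.of fun a b : Fin (n - i + 1) =>
        gnat n uu vv (i - 1 + a.val) (if b.val < n - i then b.val else k - 1)).submatrix
        Fin.succ (Fin.last (n - i)).succAbove)
      = Matrix.of fun a b : Fin (n - i) => gnat n uu vv (i + a.val) b.val := by
    funext a b
    have hbv : (((Fin.last (n - i)).succAbove b) : ℕ) = b.val := by
      rw [Fin.succAbove_last]; rfl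
    simp only [Matrix.submatrix_apply, Matrix.of_apply, hbv, Fin.val_succ]
    rw [if_pos b.is_lt, show i - 1 + (a.val + 1) = i + a.val by omega]
  rw [hsub, cornerDet uu vv hu hun _ _ (by omega)]
  simp only [Matrix.of_apply, hlast, h0, Nat.add_zero, if_neg (lt_irrefl (n - i))]

lemma Pmin_eval (i k : ℕ) (hi1 : 1 ≤ i) (hi2 : i ≤ n) (hik : n - i + 1 < k) (hk : k ≤ n) :
    MvPolynomial.aeval (R := K) (gfun n uu vv)
      (Pmin n hn i k (Xgen K n) (Xgen K n)) = vv i k := by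
  unfold Pmin
  rw [map_sum]
  rw [Finset.sum_eq_single_of_mem k (Finset.mem_Icc.mpr ⟨le_of_lt hik, le_refl k⟩)
    (fun j hj hjk => by
      have hj' := Finset.mem_Icc.mp hj
      rw [_root_.map_mul, Nmin_eval_zero n hn uu vv hu hun j k (by omega)
        (lt_of_le_of_ne hj'.2 hjk) hk, mul_zero])]
  rw [_root_.map_mul, Mmin_eval n hn uu vv hu hun i k hi1 hi2 hik hk,
    Nmin_eval_diag n hn uu vv hu hun k (by omega) hk,
    gnat_low uu vv (by omega),
    show i - 1 + 1 = i by omega, show k - 1 + 1 = k by omega,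
    show n - 1 - (i - 1) = n - i by omega, show i - 1 + 2 = i + 1 by omega]
  exact aux_field _ _ _ _ (hu (i + 1)) (hu k)
    (by rw [← pow_add]; exact Even.neg_one_pow ⟨n - i, rfl⟩)

end Eval

/-- the `n(n+1)/2` polynomials `{P_{ik}(X) : n-i+1 < k ≤ n}` together with
the corner minors `{D_k(X) : 1 ≤ k ≤ n}` are algebraically independent over `K`. -/
theorem Pmin_Dmin_algebraically_independent {K : Type*} [Field K] [Infinite K]
    (n : ℕ) (hn : 0 < n) :
    AlgebraicIndependent K
      (Sum.elim
        (fun p : {p : ℕ × ℕ // 1 ≤ p.1 ∧ p.1 ≤ n ∧ n - p.1 + 1 < p.2 ∧ p.2 ≤ n} =>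
          Pmin n hn p.1.1 p.1.2 (Xgen K n) (Xgen K n))
        (fun k : {k : ℕ // 1 ≤ k ∧ k ≤ n} =>
          Dmin n hn k.1 (Xgen K n))) := by
  set ι := {p : ℕ × ℕ // 1 ≤ p.1 ∧ p.1 ≤ n ∧ n - p.1 + 1 < p.2 ∧ p.2 ≤ n} ⊕
    {k : ℕ // 1 ≤ k ∧ k ≤ n} with hι
  let T := MvPolynomial ι K
  let F := FractionRing T
  let uu : ℕ → F := fun m =>
    if h : 1 ≤ m ∧ m ≤ n then algebraMap T F (MvPolynomial.X (Sum.inr ⟨m, h⟩)) else 1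
  let vv : ℕ → ℕ → F := fun i k =>
    if h : 1 ≤ i ∧ i ≤ n ∧ n - i + 1 < k ∧ k ≤ n then
      algebraMap T F (MvPolynomial.X (Sum.inl ⟨(i, k), h⟩)) else 1
  have hinj : Function.Injective (algebraMap T F) := IsFractionRing.injective T F
  have hu : ∀ m, uu m ≠ 0 := by
    intro m
    simp only [uu]
    split
    · exact (map_ne_zero_iff _ hinj).mpr (MvPolynomial.X_ne_zero _)
    · exact one_ne_zero
  have hun : uu (n + 1) = 1 := by simp only [uu]; rw [dif_neg (by omega)]
  apply AlgebraicIndependent.of_comp (MvPolynomial.aeval (R := K) (gfun n uu vv))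
  have hcomp : (⇑(MvPolynomial.aeval (R := K) (gfun n uu vv))) ∘
      (Sum.elim
        (fun p : {p : ℕ × ℕ // 1 ≤ p.1 ∧ p.1 ≤ n ∧ n - p.1 + 1 < p.2 ∧ p.2 ≤ n} =>
          Pmin n hn p.1.1 p.1.2 (Xgen K n) (Xgen K n))
        (fun k : {k : ℕ // 1 ≤ k ∧ k ≤ n} =>
          Dmin n hn k.1 (Xgen K n)))
      = fun idx : ι => algebraMap T F (MvPolynomial.X idx) := by
    funext idx
    cases idx with
    | inl p =>
      simp only [Function.comp_apply, Sum.elim_inl]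
      rw [Pmin_eval n hn uu vv hu hun p.1.1 p.1.2 p.2.1 p.2.2.1 p.2.2.2.1 p.2.2.2.2]
      show vv p.1.1 p.1.2 = _
      simp only [vv]
      rw [dif_pos ⟨p.2.1, p.2.2.1, p.2.2.2.1, p.2.2.2.2⟩]
    | inr k =>
      simp only [Function.comp_apply, Sum.elim_inr]
      rw [Dmin_eval n hn uu vv hu hun k.1 k.2.1 k.2.2]
      show uu k.1 = _
      simp only [uu]
      rw [dif_pos ⟨k.2.1, k.2.2⟩]
  rw [hcomp]
  have hX : AlgebraicIndependent K
      (⇑(IsScalarTower.toAlgHom K T F) ∘ (MvPolynomial.X : ι → T)) :=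
    (MvPolynomial.algebraicIndependent_X ι K).map
      (Function.Injective.injOn hinj)
  exact hX
end

section
/- Let S be an n×n matrix over a field K₀ with S_{ij} = 0 for i+j ≤ n and all anti-diagonal entries nonzero, and let Y = (y_{jk}) be a matrix of indeterminates. Then for each fixed k, the polynomial P_{ik}(S,Y) = Σ_{i'≤j≤k} M_{ij}(S)·N_{jk}(Y) equals D_i(S)·N_{i',k}(Y) plus a K₀-linear combination of the minors N_{jk}(Y) with i' < j ≤ k, and D_i(S) ≠ 0. -/
open Matrix BigOperators

/-!
The coefficients are the minors `M_{ij}(S)` themselves, so the only content is the leading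
coefficient `M_{i,i'}(S) = D_i(S)`: it is the determinant of a lower-left corner of `S`, and
reversing the order of its columns makes that corner lower triangular with the anti-diagonal
entries of `S` on its diagonal.
-/

theorem Matrix.det_ne_zero_of_antidiagonal {R : Type*} [CommRing R] [IsDomain R] {m : ℕ}
    (M : Matrix (Fin m) (Fin m) R) (h0 : ∀ a b : Fin m, a.val + b.val + 1 < m → M a b = 0)
    (hd : ∀ a : Fin m, M a a.rev ≠ 0) : M.det ≠ 0 := by
  have hrev : (M.submatrix id Fin.revPerm).det = Equiv.Perm.sign (Fin.revPerm (n := m)) * M.det :=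
    Matrix.det_permute' _ _
  have hlower : (M.submatrix id (Fin.revPerm (n := m))).BlockTriangular OrderDual.toDual := by
    intro a b hab
    have : a.val < b.val := hab
    apply h0
    simp only [id_eq, Fin.revPerm_apply, Fin.val_rev]
    omega
  have hprod : (M.submatrix id Fin.revPerm).det = ∏ a, M a a.rev :=
    Matrix.det_of_isLowerTriangular _ hlower
  intro h
  rw [h, mul_zero] at hrev
  exact Finset.prod_ne_zero_iff.2 (fun a _ => hd a) (hprod.symm.trans hrev)

section Minors

variable {R : Type*} [CommRing R] (n : ℕ) (hn : 0 < n)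

theorem Mmin_map {R' : Type*} [CommRing R'] (f : R →+* R') (i j : ℕ)
    (X : Matrix (Fin n) (Fin n) R) : Mmin n hn i j (X.map f) = f (Mmin n hn i j X) :=
  (RingHom.map_det f _).symm

theorem Mmin_self_eq_Dmin (i : ℕ) (X : Matrix (Fin n) (Fin n) R) :
    Mmin n hn i (n - i + 1) X = Dmin n hn i X := by
  unfold Mmin Dmin
  congr 1
  ext a b
  have hb := b.isLt
  have hcol : (if b.val < n - i then b.val else n - i + 1 - 1) = b.val := by split <;> omega
  simp only [Matrix.of_apply, hcol]

theorem Pmin_eq_add_sum_Ioc (i k : ℕ) (hik : n - i + 1 ≤ k) (X Y : Matrix (Fin n) (Fin n) R) :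
    Pmin n hn i k X Y = Dmin n hn i X * Nmin n hn (n - i + 1) k Y +
      ∑ j ∈ Finset.Ioc (n - i + 1) k, Mmin n hn i j X * Nmin n hn j k Y := by
  rw [Pmin, Finset.Icc_eq_cons_Ioc hik, Finset.sum_cons, Mmin_self_eq_Dmin]

end Minors

theorem Dmin_ne_zero_of_antitriangular {K : Type*} [CommRing K] [IsDomain K] (n : ℕ) (hn : 0 < n)
    (S : Matrix (Fin n) (Fin n) K) (hS : ∀ a b : Fin n, a.val + b.val + 2 ≤ n → S a b = 0)
    (hS' : ∀ r ∈ Finset.Icc 1 n, S (fidx n hn (r - 1)) (fidx n hn (n - r)) ≠ 0)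
    (i : ℕ) (hi : 1 ≤ i) (hin : i ≤ n) : Dmin n hn i S ≠ 0 := by
  have hval {x : ℕ} (hx : x < n) : (fidx n hn x).val = x := Nat.mod_eq_of_lt hx
  apply Matrix.det_ne_zero_of_antidiagonal
  · intro a b hab
    have ha := a.isLt
    have hb := b.isLt
    exact hS _ _ (by rw [hval (by omega), hval (by omega)]; omega)
  · intro a
    have hr : i + a.val - 1 = i - 1 + a.val := by omega
    have hc : a.rev.val = n - (i + a.val) := by rw [Fin.val_rev]; omega
    simpa only [Matrix.of_apply, hr, hc] using hS' (i + a.val) (Finset.mem_Icc.2 ⟨by omega, by omega⟩)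

theorem Pmin_section_triangular_general {K₀ : Type*} [Field K₀] (n : ℕ) (hn : 0 < n)
    (S : Matrix (Fin n) (Fin n) K₀)
    (hS : ∀ a b : Fin n, a.val + b.val + 2 ≤ n → S a b = 0)
    (hS' : ∀ r ∈ Finset.Icc 1 n, S (fidx n hn (r - 1)) (fidx n hn (n - r)) ≠ 0)
    (i k : ℕ) (hi : 1 ≤ i) (hin : i ≤ n) (hik : n - i + 1 < k) :
    Dmin n hn i S ≠ 0 ∧
    ∃ c : ℕ → K₀,
      Pmin n hn i k (S.map MvPolynomial.C) (Xgen K₀ n) =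
        MvPolynomial.C (Dmin n hn i S) * Nmin n hn (n - i + 1) k (Xgen K₀ n) +
          ∑ j ∈ Finset.Ioc (n - i + 1) k,
            MvPolynomial.C (c j) * Nmin n hn j k (Xgen K₀ n) := by
  refine ⟨Dmin_ne_zero_of_antitriangular n hn S hS hS' i hi hin, fun j => Mmin n hn i j S, ?_⟩
  rw [Pmin_eq_add_sum_Ioc n hn i k hik.le, ← Mmin_self_eq_Dmin, Mmin_map, Mmin_self_eq_Dmin]
  simp only [Mmin_map]

/-- let `S` be an anti-triangular matrix over `K₀` with nonzero
anti-diagonal entries and `Y` a matrix of indeterminates. Then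
`P_{ik}(S,Y) = D_i(S)·N_{i',k}(Y) + (a K₀-linear combination of the N_{jk}(Y), i' < j ≤ k)`,
and `D_i(S) ≠ 0`. -/
theorem Pmin_section_triangular {K₀ : Type*} [Field K₀] (n : ℕ) (hn : 0 < n)
    (S : Matrix (Fin n) (Fin n) K₀)
    (hS : ∀ a b : Fin n, a.val + b.val + 2 ≤ n → S a b = 0)
    (hS' : ∀ r ∈ Finset.Icc 1 n, S (fidx n hn (r - 1)) (fidx n hn (n - r)) ≠ 0)
    (i k : ℕ) (hi : 1 ≤ i) (hin : i ≤ n) (hik : n - i + 1 < k) (hkn : k ≤ n) :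
    Dmin n hn i S ≠ 0 ∧
    ∃ c : ℕ → K₀,
      Pmin n hn i k (S.map MvPolynomial.C) (Xgen K₀ n) =
        MvPolynomial.C (Dmin n hn i S) * Nmin n hn (n - i + 1) k (Xgen K₀ n) +
          ∑ j ∈ Finset.Ioc (n - i + 1) k,
            MvPolynomial.C (c j) * Nmin n hn j k (Xgen K₀ n) :=
  Pmin_section_triangular_general n hn S hS hS' i k hi hin hik
end

section
/- For m-tuples of matrices with diagonal conjugation action of UT(n), the restriction map π : K[ℋ]^{UT(n)} → K[𝒮_ℋ] to the section 𝒮_ℋ = 𝒮 × Mat(n)^{m−1} (first component restricted to anti-triangular matrices) is an injective K-algebra homomorphism. -/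
open Matrix BigOperators

namespace Statement18Aux


variable {K : Type*} [Field K]

set_option maxRecDepth 8000 in
lemma sum_shift {M : Type*} [AddCommMonoid M] {n : ℕ} (a : Fin n) (G : Fin n → M)
    (hG : ∀ c : Fin n, c.val ≤ a.val → G c = 0) :
    ∑ c : Fin n, G c
      = ∑ i : Fin (n - 1 - a.val), G ⟨a.val + 1 + i.val, by have := i.isLt; omega⟩ := by
  have h0 : ∑ c ∈ Finset.Ioi a, G c = ∑ c : Fin n, G c := by
    apply Finset.sum_subset (Finset.subset_univ _)
    intro c _ hc
    apply hG
    have h1 : ¬ a < c := fun h => hc (Finset.mem_Ioi.mpr h)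
    have h2 : ¬ a.val < c.val := fun h => h1 h
    omega
  rw [← h0]
  refine (Finset.sum_bij' (fun c hc => (⟨c.val - a.val - 1, by
      have := c.isLt
      have hac : a < c := Finset.mem_Ioi.mp hc
      have : a.val < c.val := hac
      omega⟩ : Fin (n - 1 - a.val)))
    (fun i _ => (⟨a.val + 1 + i.val, by have := i.isLt; omega⟩ : Fin n))
    (fun c hc => Finset.mem_univ _) (fun i _ => ?_) (fun c hc => ?_) (fun i _ => ?_)
    (fun c hc => ?_))
  · simp only [Finset.mem_Ioi, Fin.lt_def]; omega
  · have hac : a < c := Finset.mem_Ioi.mp hc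
    have : a.val < c.val := hac
    exact Fin.ext (by have := c.isLt; simp only [Fin.val_mk]; omega)
  · exact Fin.ext (by simp only [Fin.val_mk]; omega)
  · have hac : a < c := Finset.mem_Ioi.mp hc
    have : a.val < c.val := hac
    congr 1; exact Fin.ext (by have := c.isLt; simp only [Fin.val_mk]; omega)

lemma exists_unitriangular {n : ℕ} (X : Matrix (Fin n) (Fin n) K)
    (hdet : ∀ a : Fin n,
      (Matrix.of fun i j : Fin (n - 1 - a.val) =>
        X ⟨a.val + 1 + i.val, by have := i.isLt; omega⟩
          ⟨j.val, by have := j.isLt; have := a.isLt; omega⟩).det ≠ 0) :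
    ∃ u : Matrix (Fin n) (Fin n) K, IsUnitriangular u ∧
      ∀ a b : Fin n, a.val + b.val + 2 ≤ n → (u * X * u⁻¹) a b = 0 := by
  classical
  -- the square corner systems
  set A : ∀ a : Fin n, Matrix (Fin (n - 1 - a.val)) (Fin (n - 1 - a.val)) K :=
    fun a => Matrix.of fun i j =>
      X ⟨a.val + 1 + i.val, by have := i.isLt; omega⟩
        ⟨j.val, by have := j.isLt; have := a.isLt; omega⟩ with hA
  have hAdet : ∀ a, IsUnit (A a).det := fun a => isUnit_iff_ne_zero.mpr (hdet a)
  -- the solutions rows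
  set t : ∀ a : Fin n, Fin (n - 1 - a.val) → K :=
    fun a => Matrix.vecMul
      (fun j : Fin (n - 1 - a.val) =>
        -(X a ⟨j.val, by have := j.isLt; have := a.isLt; omega⟩)) (A a)⁻¹ with hT
  have ht : ∀ (a : Fin n) (j : Fin (n - 1 - a.val)),
      ∑ i, t a i * A a i j = -(X a ⟨j.val, by have := j.isLt; have := a.isLt; omega⟩) := by
    intro a j
    have : Matrix.vecMul (t a) (A a) = fun j : Fin (n - 1 - a.val) =>
        -(X a ⟨j.val, by have := j.isLt; have := a.isLt; omega⟩) := by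
      rw [hT]
      rw [Matrix.vecMul_vecMul, Matrix.nonsing_inv_mul _ (hAdet a), Matrix.vecMul_one]
    have := congrFun this j
    simpa [Matrix.vecMul, dotProduct] using this
  -- the unitriangular matrix
  set u : Matrix (Fin n) (Fin n) K := Matrix.of fun a c =>
    if h : a.val < c.val then t a ⟨c.val - a.val - 1, by have := c.isLt; omega⟩
    else if a = c then 1 else 0 with hu
  have hu_tri : u.BlockTriangular id := by
    intro i j hij
    have hij' : j.val < i.val := hij
    have h1 : ¬ i.val < j.val := by omega
    have h2 : ¬ (i = j) := by intro e; subst e; omega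
    show u i j = 0
    rw [hu]
    simp only [Matrix.of_apply]
    rw [dif_neg h1, if_neg h2]
  have huni : IsUnitriangular u := by
    refine ⟨fun i => by simp [hu], fun i j hij => hu_tri hij⟩
  have hudet : IsUnit u.det := by
    rw [Matrix.det_of_upperTriangular hu_tri]
    simp [hu]
  -- key: rows of u * X vanish in the corner
  have hux : ∀ a b : Fin n, b.val < n - 1 - a.val → (u * X) a b = 0 := by
    intro a b hb
    rw [Matrix.mul_apply]
    have split : ∀ c : Fin n, u a c * X c b =
        ((if c = a then X a b else 0) +
          (if h : a.val < c.val then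
            t a ⟨c.val - a.val - 1, by have := c.isLt; omega⟩ * X c b else 0)) := by
      intro c
      rcases lt_trichotomy a.val c.val with h1 | h1 | h1
      · have hca : ¬ (c = a) := fun e => by subst e; omega
        have hac : ¬ (a = c) := fun e => by subst e; omega
        rw [hu]
        simp only [Matrix.of_apply]
        rw [dif_pos h1, if_neg hca, zero_add]
        rw [dif_pos h1]
      · have : c = a := Fin.ext h1.symm
        subst this
        rw [hu]
        simp
      · have h2 : ¬ a.val < c.val := by omega
        have hca : ¬ (c = a) := fun e => by subst e; omega
        have hac : ¬ (a = c) := fun e => by subst e; omega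
        rw [hu]
        simp only [Matrix.of_apply]
        rw [dif_neg h2, if_neg hac, zero_mul, if_neg hca, dif_neg h2, add_zero]
    rw [Finset.sum_congr rfl fun c _ => split c, Finset.sum_add_distrib]
    rw [Finset.sum_ite_eq' Finset.univ a (fun _ => X a b)]
    have e2 : ∑ c : Fin n, (if h : a.val < c.val then
        t a ⟨c.val - a.val - 1, by have := c.isLt; omega⟩ * X c b else 0)
        = ∑ i : Fin (n - 1 - a.val), t a i * A a i ⟨b.val, hb⟩ := by
      rw [sum_shift a _ (fun c hc => dif_neg (by omega))]
      refine Finset.sum_congr rfl fun i _ => ?_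
      rw [dif_pos (show a.val < a.val + 1 + i.val by omega)]
      congr 1
      · congr 1
        exact Fin.ext (by simp only [Fin.val_mk]; omega)
    rw [e2, ht a ⟨b.val, hb⟩]
    simp
  -- conclude for the conjugate
  refine ⟨u, huni, fun a b hab => ?_⟩
  haveI : Invertible u := u.invertibleOfIsUnitDet hudet
  have hinv_tri : u⁻¹.BlockTriangular id :=
    Matrix.blockTriangular_inv_of_blockTriangular hu_tri
  rw [Matrix.mul_apply]
  refine Finset.sum_eq_zero fun c _ => ?_
  by_cases hc : c.val < n - 1 - a.val
  · rw [hux a c hc, zero_mul]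
  · have : (b : Fin n) < c := by
      rw [Fin.lt_def]; have := a.isLt; omega
    rw [hinv_tri this, mul_zero]

end Statement18Aux

/-- for the diagonal conjugation action of `UT(n)` on `Mat(n)^m`, the
restriction map `π : K[ℋ]^{UT(n)} → K[𝒮_ℋ]` to the section
`𝒮_ℋ = 𝒮 × Mat(n)^{m-1}` (first component anti-triangular) is injective. -/
theorem tuple_restriction_to_section_injective {K : Type*} [Field K] [Infinite K]
    (m n : ℕ) (hm : 0 < m) (hn : 0 < n)
    (f g : MvPolynomial (Fin m × Fin n × Fin n) K)
    (hf : ∀ (u : Matrix (Fin n) (Fin n) K) (X : Fin m → Matrix (Fin n) (Fin n) K),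
      IsUnitriangular u →
      MvPolynomial.eval (fun v => (u * X v.1 * u⁻¹) v.2.1 v.2.2) f =
        MvPolynomial.eval (fun v => X v.1 v.2.1 v.2.2) f)
    (hg : ∀ (u : Matrix (Fin n) (Fin n) K) (X : Fin m → Matrix (Fin n) (Fin n) K),
      IsUnitriangular u →
      MvPolynomial.eval (fun v => (u * X v.1 * u⁻¹) v.2.1 v.2.2) g =
        MvPolynomial.eval (fun v => X v.1 v.2.1 v.2.2) g)
    (hfg : ∀ X : Fin m → Matrix (Fin n) (Fin n) K,
      (∀ a b : Fin n, a.val + b.val + 2 ≤ n → X ⟨0, hm⟩ a b = 0) →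
      MvPolynomial.eval (fun v => X v.1 v.2.1 v.2.2) f =
        MvPolynomial.eval (fun v => X v.1 v.2.1 v.2.2) g) :
    f = g := by
  classical
  set h : MvPolynomial (Fin m × Fin n × Fin n) K :=
    ∏ a : Fin n, (Matrix.of fun i j : Fin (n - 1 - a.val) =>
      MvPolynomial.X (⟨0, hm⟩, ⟨a.val + 1 + i.val, by have := i.isLt; omega⟩,
        ⟨j.val, by have := j.isLt; have := a.isLt; omega⟩)).det with hh
  have heval : ∀ x : (Fin m × Fin n × Fin n) → K,
      MvPolynomial.eval x h = ∏ a : Fin n,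
        (Matrix.of fun i j : Fin (n - 1 - a.val) =>
          x (⟨0, hm⟩, ⟨a.val + 1 + i.val, by have := i.isLt; omega⟩,
            ⟨j.val, by have := j.isLt; have := a.isLt; omega⟩)).det := by
    intro x
    rw [hh, map_prod]
    refine Finset.prod_congr rfl fun a _ => ?_
    rw [RingHom.map_det]
    congr 1
    ext i j
    simp [MvPolynomial.eval_X]
  have hne : h ≠ 0 := by
    intro h0
    have h1 := heval (fun v => if v.2.1.val + v.2.2.val = n - 1 then (1 : K) else 0)
    rw [h0, map_zero] at h1
    obtain ⟨a, -, ha⟩ := Finset.prod_eq_zero_iff.mp h1.symm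
    apply absurd ha
    have hmat : (Matrix.of fun i j : Fin (n - 1 - a.val) =>
        (fun v : Fin m × Fin n × Fin n =>
          if v.2.1.val + v.2.2.val = n - 1 then (1 : K) else 0)
          (⟨0, hm⟩, ⟨a.val + 1 + i.val, by have := i.isLt; omega⟩,
            ⟨j.val, by have := j.isLt; have := a.isLt; omega⟩))
        = (1 : Matrix (Fin (n - 1 - a.val)) (Fin (n - 1 - a.val)) K).submatrix
            Fin.revPerm id := by
      ext i j
      have hi := i.isLt
      have hj := j.isLt
      have han := a.isLt
      simp only [Matrix.of_apply, Matrix.submatrix_apply, Matrix.one_apply,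
        Fin.revPerm_apply, id_eq, Fin.val_mk]
      have hiff : (Fin.rev i = j) ↔ (a.val + 1 + i.val + j.val = n - 1) := by
        rw [Fin.ext_iff, Fin.val_rev]
        omega
      by_cases hc : a.val + 1 + i.val + j.val = n - 1
      · rw [if_pos hc, if_pos (hiff.mpr hc)]
      · rw [if_neg hc, if_neg (fun e => hc (hiff.mp e))]
    rw [hmat, Matrix.det_permute, Matrix.det_one, mul_one]
    rcases Int.units_eq_one_or (Equiv.Perm.sign (Fin.revPerm (n := n - 1 - a.val)))
      with hs | hs <;> simp [hs]
  have key : ∀ x : (Fin m × Fin n × Fin n) → K,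
      (MvPolynomial.eval x f - MvPolynomial.eval x g) * MvPolynomial.eval x h = 0 := by
    intro x
    by_cases hx : MvPolynomial.eval x h = 0
    · rw [hx, mul_zero]
    · rw [heval x] at hx
      have hdets := Finset.prod_ne_zero_iff.mp hx
      set X0 : Fin m → Matrix (Fin n) (Fin n) K :=
        fun ℓ => Matrix.of fun a b => x (ℓ, a, b) with hX0
      obtain ⟨u, huni, hcorner⟩ := Statement18Aux.exists_unitriangular (X0 ⟨0, hm⟩)
        (fun a => hdets a (Finset.mem_univ a))
      have e3 : MvPolynomial.eval (fun v => (u * X0 v.1 * u⁻¹) v.2.1 v.2.2) f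
          = MvPolynomial.eval (fun v => (u * X0 v.1 * u⁻¹) v.2.1 v.2.2) g :=
        hfg (fun ℓ => u * X0 ℓ * u⁻¹) (fun a b hab => hcorner a b hab)
      have hfx : MvPolynomial.eval x f = MvPolynomial.eval x g := by
        calc MvPolynomial.eval x f
            = MvPolynomial.eval (fun v => X0 v.1 v.2.1 v.2.2) f := rfl
          _ = MvPolynomial.eval (fun v => (u * X0 v.1 * u⁻¹) v.2.1 v.2.2) f :=
              (hf u X0 huni).symm
          _ = MvPolynomial.eval (fun v => (u * X0 v.1 * u⁻¹) v.2.1 v.2.2) g := e3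
          _ = MvPolynomial.eval (fun v => X0 v.1 v.2.1 v.2.2) g := hg u X0 huni
          _ = MvPolynomial.eval x g := rfl
      rw [hfx, sub_self, zero_mul]
  have hzero : (f - g) * h = 0 := by
    apply MvPolynomial.funext
    intro x
    rw [_root_.map_mul, _root_.map_sub, map_zero]
    exact key x
  rcases mul_eq_zero.mp hzero with h1 | h1
  · exact sub_eq_zero.mp h1
  · exact absurd h1 hne
end
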